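/- arXiv:1112.0970 — 3 statements merged into one kernel-verified Lean document; each statement's English description precedes it below -/
import Mathlib

section
/- Let n = (n_1,…,n_m) be a tuple of nonnegative integers with N = n_1+⋯+n_m and, for a real number a, let C(n;a) = Σ_{π ∈ P(n)} a^{bl(π)}, the sum over all inhomogeneous set partitions π of [N] with respect to the boxes determined by n, where bl(π) is the number of blocks of π. Then for all j ≠ k in {1,…,m} and all real a: C_j^+(n;a) − C_k^+(n;a) = (n_k − n_j) C(n;a) + a·n_k·C_k^-(n;a) − a·n_j·C_j^-(n;a), where a term n_j C_j^-(n;a) is interpreted as 0 when n_j = 0. -/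
open Finset MeasureTheory
open scoped Classical

namespace Paper

/-- Sum of sizes of boxes before box `j`. -/
def psum {m : ℕ} (n : Fin m → ℕ) (j : Fin m) : ℕ :=
  ∑ t : Fin m, if t < j then n t else 0

/-- `i` (0-indexed) lies in box `j`. -/
def inBox {m : ℕ} (n : Fin m → ℕ) (j : Fin m) (i : ℕ) : Prop :=
  psum n j ≤ i ∧ i < psum n j + n j

/-- `i` and `k` lie in a common box. -/
def sameBox {m : ℕ} (n : Fin m → ℕ) (i k : ℕ) : Prop :=
  ∃ j : Fin m, inBox n j i ∧ inBox n j k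

/-- Total number of elements. -/
def total {m : ℕ} (n : Fin m → ℕ) : ℕ := ∑ t, n t

/-- `P` is a set partition of `{0, …, N-1}`. -/
def IsPartitionOf (N : ℕ) (P : Finset (Finset ℕ)) : Prop :=
  (∀ b ∈ P, b ⊆ Finset.range N ∧ b.Nonempty) ∧
  ∀ i ∈ Finset.range N, (P.filter fun b => i ∈ b).card = 1

/-- No block of `P` contains two distinct elements of the same box. -/
def InhomBlocks {m : ℕ} (n : Fin m → ℕ) (P : Finset (Finset ℕ)) : Prop :=
  ∀ b ∈ P, ∀ i ∈ b, ∀ k ∈ b, i ≠ k → ¬ sameBox n i k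

/-- The inhomogeneous perfect matchings of `[N]` w.r.t. the boxes of `n`. -/
noncomputable def matchings {m : ℕ} (n : Fin m → ℕ) : Finset (Finset (Finset ℕ)) :=
  ((Finset.range (total n)).powerset.powerset).filter
    (fun P => IsPartitionOf (total n) P ∧ (∀ b ∈ P, b.card = 2) ∧ InhomBlocks n P)

/-- Number of inhomogeneous perfect matchings. -/
noncomputable def K {m : ℕ} (n : Fin m → ℕ) : ℕ := (matchings n).card

/-- The inhomogeneous set partitions of `[N]`: every block has at least two
elements and no block meets a box twice. -/
noncomputable def inhomPartitions {m : ℕ} (n : Fin m → ℕ) : Finset (Finset (Finset ℕ)) :=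
  ((Finset.range (total n)).powerset.powerset).filter
    (fun P => IsPartitionOf (total n) P ∧ (∀ b ∈ P, 2 ≤ b.card) ∧ InhomBlocks n P)

/-- The generating polynomial `C(n;a) = Σ_{π ∈ P(n)} a^{bl(π)}`. -/
noncomputable def charlierGF {m : ℕ} (n : Fin m → ℕ) (a : ℝ) : ℝ :=
  ∑ P ∈ inhomPartitions n, a ^ P.card

/-!
Colour every point of `[N]` by its box. Then `C(n;a)` is the block generating function of the
rainbow partitions of a coloured finite set (blocks of size at least two, no colour repeated
inside a block), and it only depends on how many points carry each colour. Add a new point `x`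
of colour `j`. Either `x` lies in a pair `{x, y}` with `y` of another colour, and removing that
pair leaves a rainbow partition of the rest; or removing `x` from its block leaves a rainbow
partition `π` of the old set together with a block of `π` avoiding colour `j`. As each point of
colour `j` lies in its own block, `π` has `bl(π) - n_j` such blocks. Hence
`C_j^+ = Σ_π (bl(π) - n_j) a^bl(π) + a (Σ_t n_t C_t^- - n_j C_j^-)`, and subtracting the same
identity for `k` gives the theorem.
-/

section RainbowPartitions
variable {α β κ : Type*} [DecidableEq α] [DecidableEq β] [DecidableEq κ]

def IsPartitionOn (S : Finset α) (P : Finset (Finset α)) : Prop :=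
  (∀ b ∈ P, b ⊆ S ∧ b.Nonempty) ∧ ∀ i ∈ S, #(P.filter fun b => i ∈ b) = 1

namespace IsPartitionOn
variable {S T B : Finset α} {P : Finset (Finset α)}

lemma exists_mem (hP : IsPartitionOn S P) {i : α} (hi : i ∈ S) : ∃ b ∈ P, i ∈ b := by
  obtain ⟨b, hb⟩ := card_eq_one.mp (hP.2 i hi)
  exact ⟨b, mem_filter.mp (hb ▸ mem_singleton_self b)⟩

lemma eq_of_mem (hP : IsPartitionOn S P) {b b' : Finset α} (hb : b ∈ P) (hb' : b' ∈ P)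
    {i : α} (hib : i ∈ b) (hib' : i ∈ b') : b = b' :=
  card_le_one.mp (hP.2 i ((hP.1 b hb).1 hib)).le _ (mem_filter.mpr ⟨hb, hib⟩) _
    (mem_filter.mpr ⟨hb', hib'⟩)

lemma notMem_of_mem (hP : IsPartitionOn S P) {x : α} (hxS : x ∉ S) (hxB : x ∈ B) : B ∉ P :=
  fun hB => hxS ((hP.1 B hB).1 hxB)

lemma erase (hP : IsPartitionOn S P) (hB : B ∈ P) : IsPartitionOn (S \ B) (P.erase B) := by
  refine ⟨fun b hb => ?_, fun i hi => ?_⟩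
  · obtain ⟨hbB, hbP⟩ := mem_erase.mp hb
    refine ⟨fun y hy => mem_sdiff.mpr ⟨(hP.1 b hbP).1 hy, fun hyB => ?_⟩, (hP.1 b hbP).2⟩
    exact hbB (hP.eq_of_mem hbP hB hy hyB)
  · obtain ⟨hiS, hiB⟩ := mem_sdiff.mp hi
    have hBi : B ∉ P.filter fun b => i ∈ b := fun h => hiB (mem_filter.mp h).2
    rw [filter_erase, erase_eq_of_notMem hBi, hP.2 i hiS]

lemma insert (hP : IsPartitionOn T P) (hBT : Disjoint B T) (hB : B.Nonempty) :
    IsPartitionOn (B ∪ T) (insert B P) := by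
  refine ⟨fun b hb => ?_, fun i hi => ?_⟩
  · rcases mem_insert.mp hb with rfl | hb
    · exact ⟨subset_union_left, hB⟩
    · exact ⟨(hP.1 b hb).1.trans subset_union_right, (hP.1 b hb).2⟩
  · rw [filter_insert]
    by_cases hiB : i ∈ B
    · have hiT : i ∉ T := disjoint_left.mp hBT hiB
      rw [if_pos hiB, filter_false_of_mem fun b hb hib => hiT ((hP.1 b hb).1 hib)]
      rfl
    · rw [if_neg hiB]
      exact hP.2 i ((mem_union.mp hi).resolve_left hiB)

end IsPartitionOn

noncomputable def rainbowPartitions (S : Finset α) (c : α → κ) : Finset (Finset (Finset α)) :=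
  S.powerset.powerset.filter fun P =>
    IsPartitionOn S P ∧ (∀ b ∈ P, 2 ≤ #b) ∧ ∀ b ∈ P, Set.InjOn c b

noncomputable def rainbowGF (S : Finset α) (c : α → κ) (a : ℝ) : ℝ :=
  ∑ P ∈ rainbowPartitions S c, a ^ #P

variable {S T B : Finset α} {c : α → κ} {P : Finset (Finset α)}

lemma mem_rainbowPartitions :
    P ∈ rainbowPartitions S c ↔
      IsPartitionOn S P ∧ (∀ b ∈ P, 2 ≤ #b) ∧ ∀ b ∈ P, Set.InjOn c b := by
  rw [rainbowPartitions, mem_filter, and_iff_right_iff_imp, mem_powerset]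
  exact fun h b hb => mem_powerset.mpr (h.1.1 b hb).1

lemma rainbowPartitions_congr {c' : α → κ} (h : ∀ x ∈ S, c x = c' x) :
    rainbowPartitions S c = rainbowPartitions S c' := by
  ext P
  simp only [mem_rainbowPartitions, and_congr_right_iff]
  intro hP _
  refine forall₂_congr fun b hb => ?_
  exact Set.EqOn.injOn_iff fun x hx => h x ((hP.1 b hb).1 hx)

lemma rainbowGF_congr {c' : α → κ} (h : ∀ x ∈ S, c x = c' x) (a : ℝ) :
    rainbowGF S c a = rainbowGF S c' a := by
  rw [rainbowGF, rainbowGF, rainbowPartitions_congr h]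

lemma erase_mem_rainbowPartitions (hP : P ∈ rainbowPartitions S c) (hB : B ∈ P) :
    P.erase B ∈ rainbowPartitions (S \ B) c := by
  obtain ⟨hpart, hsize, hinj⟩ := mem_rainbowPartitions.mp hP
  exact mem_rainbowPartitions.mpr ⟨hpart.erase hB, fun b hb => hsize b (mem_of_mem_erase hb),
    fun b hb => hinj b (mem_of_mem_erase hb)⟩

lemma insert_mem_rainbowPartitions (hP : P ∈ rainbowPartitions T c) (hBT : Disjoint B T)
    (hB : 2 ≤ #B) (hBc : Set.InjOn c B) : insert B P ∈ rainbowPartitions (B ∪ T) c := by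
  obtain ⟨hpart, hsize, hinj⟩ := mem_rainbowPartitions.mp hP
  refine mem_rainbowPartitions.mpr ⟨hpart.insert hBT (card_pos.mp (by omega)), ?_, ?_⟩ <;>
    intro b hb <;> rcases mem_insert.mp hb with rfl | hb
  exacts [hB, hsize b hb, hBc, hinj b hb]

lemma map_mem_rainbowPartitions (σ : α ≃ β) {c' : β → κ} (hc : ∀ x ∈ S, c' (σ x) = c x)
    (hP : P ∈ rainbowPartitions S c) :
    P.map σ.finsetCongr.toEmbedding ∈ rainbowPartitions (S.map σ.toEmbedding) c' := by
  obtain ⟨⟨hsub, hcount⟩, hsize, hinj⟩ := mem_rainbowPartitions.mp hP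
  simp only [mem_rainbowPartitions, IsPartitionOn, forall_mem_map, Equiv.coe_toEmbedding,
    Equiv.finsetCongr_apply, card_map]
  refine ⟨⟨fun b hb => ⟨map_subset_map.mpr (hsub b hb).1, (hsub b hb).2.map⟩,
    fun x hx => ?_⟩, hsize, fun b hb => ?_⟩
  · rw [filter_map, card_map, ← hcount x hx]
    congr 2
    ext b
    simp
  · rw [coe_map]
    exact Set.InjOn.image_of_comp ((Set.EqOn.injOn_iff fun x hx =>
      (hc x ((hsub b hb).1 hx)).symm).mp (hinj b hb))

lemma rainbowGF_map (σ : α ≃ β) {c' : β → κ} (hc : ∀ x ∈ S, c' (σ x) = c x) (a : ℝ) :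
    rainbowGF (S.map σ.toEmbedding) c' a = rainbowGF S c a := by
  have hc' : ∀ y ∈ S.map σ.toEmbedding, c (σ.symm y) = c' y := by
    intro y hy
    rw [mem_map_equiv] at hy
    rw [← hc _ hy, Equiv.apply_symm_apply]
  have hS : (S.map σ.toEmbedding).map σ.symm.toEmbedding = S := by
    simp [map_map]
  refine sum_nbij' (fun Q => Q.map σ.symm.finsetCongr.toEmbedding)
    (fun P => P.map σ.finsetCongr.toEmbedding) (fun Q hQ => ?_)
    (fun P hP => map_mem_rainbowPartitions σ hc hP) (fun Q _ => ?_) (fun P _ => ?_)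
    (fun Q _ => by simp)
  · simpa [hS] using map_mem_rainbowPartitions σ.symm hc' hQ
  · rw [← Equiv.finsetCongr_symm, map_map,
      Function.Embedding.equiv_symm_toEmbedding_trans_toEmbedding, map_refl]
  · rw [← Equiv.finsetCongr_symm, map_map,
      Function.Embedding.equiv_toEmbedding_trans_symm_toEmbedding, map_refl]

lemma exists_equiv_map_eq_of_card_filter_eq {S' : Finset α} {c' : α → κ}
    (h : ∀ γ, #(S.filter (c · = γ)) = #(S'.filter (c' · = γ))) :
    ∃ σ : α ≃ α, S.map σ.toEmbedding = S' ∧ ∀ x ∈ S, c' (σ x) = c x := by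
  have hfib : ∀ γ, {x : S // c x = γ} ≃ {x : S' // c' x = γ} := fun γ =>
    Fintype.equivOfCardEq (by
      rw [Fintype.card_subtype, Fintype.card_subtype, ← card_map (Function.Embedding.subtype _),
        ← card_map (Function.Embedding.subtype _)]
      convert h γ using 2 <;> ext <;> simp [and_comm])
  let e : S ≃ S' := Equiv.ofFiberEquiv hfib
  have hσ : ∀ x (hx : x ∈ S), e.extendSubtype x = e ⟨x, hx⟩ := e.extendSubtype_apply_of_mem
  refine ⟨e.extendSubtype, ?_, fun x hx => ?_⟩
  · ext y
    rw [mem_map_equiv]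
    refine ⟨fun hy => ?_, fun hy => ?_⟩
    · rw [← Equiv.apply_symm_apply e.extendSubtype y, hσ _ hy]
      exact (e _).2
    · have hx := (e.symm ⟨y, hy⟩).2
      rwa [← Subtype.coe_mk y hy, ← Equiv.apply_symm_apply e ⟨y, hy⟩, ← hσ _ hx,
        Equiv.symm_apply_apply]
  · rw [hσ x hx]
    exact Equiv.ofFiberEquiv_map hfib ⟨x, hx⟩

lemma rainbowGF_eq_of_card_filter_eq {S' : Finset α} {c' : α → κ}
    (h : ∀ γ, #(S.filter (c · = γ)) = #(S'.filter (c' · = γ))) (a : ℝ) :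
    rainbowGF S c a = rainbowGF S' c' a := by
  obtain ⟨σ, rfl, hc⟩ := exists_equiv_map_eq_of_card_filter_eq h
  exact (rainbowGF_map σ hc a).symm

lemma card_filter_avoid_add_card_filter (hP : P ∈ rainbowPartitions S c) (γ : κ) :
    #(P.filter fun b => ∀ y ∈ b, c y ≠ γ) + #(S.filter (c · = γ)) = #P := by
  obtain ⟨hpart, -, hinj⟩ := mem_rainbowPartitions.mp hP
  rw [← card_filter_add_card_filter_not (s := P) (fun b => ∀ y ∈ b, c y ≠ γ), add_left_cancel_iff]
  have hblock : ∀ y ∈ S, ∃ b ∈ P, y ∈ b := fun y hy => hpart.exists_mem hy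
  choose! block hblockP hmem using hblock
  refine card_bij (fun y _ => block y) (fun y hy => ?_) (fun y hy z hz hyz => ?_) (fun b hb => ?_)
  · obtain ⟨hyS, hyc⟩ := mem_filter.mp hy
    exact mem_filter.mpr ⟨hblockP y hyS, fun h => h y (hmem y hyS) hyc⟩
  · obtain ⟨hyS, hyc⟩ := mem_filter.mp hy
    obtain ⟨hzS, hzc⟩ := mem_filter.mp hz
    exact hinj _ (hblockP y hyS) (hmem y hyS) (hyz ▸ hmem z hzS) (hyc.trans hzc.symm)
  · obtain ⟨hbP, hb⟩ := mem_filter.mp hb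
    push Not at hb
    obtain ⟨y, hyb, hyc⟩ := hb
    have hyS := (hpart.1 b hbP).1 hyb
    exact ⟨y, mem_filter.mpr ⟨hyS, hyc⟩, hpart.eq_of_mem (hblockP y hyS) hbP (hmem y hyS) hyb⟩

variable {x : α}

lemma insert_pair_mem_rainbowPartitions (hx : x ∉ S) {y : α} (hy : y ∈ S) (hxy : c y ≠ c x)
    {ρ : Finset (Finset α)} (hρ : ρ ∈ rainbowPartitions (S.erase y) c) :
    insert {x, y} ρ ∈ rainbowPartitions (insert x S) c := by
  have hne : x ≠ y := by rintro rfl; exact hx hy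
  have hunion : {x, y} ∪ S.erase y = insert x S := by
    rw [insert_union, singleton_union, insert_erase hy]
  rw [← hunion]
  refine insert_mem_rainbowPartitions hρ ?_ (card_pair hne).ge ?_
  · simp [hx]
  · rw [coe_pair, Set.injOn_pair]
    exact fun h => absurd h.symm hxy

lemma erase_pair_mem_rainbowPartitions (hx : x ∉ S) {P : Finset (Finset α)}
    (hP : P ∈ rainbowPartitions (insert x S) c) {y : α} (hxy : {x, y} ∈ P) :
    y ∈ S ∧ c y ≠ c x ∧ P.erase {x, y} ∈ rainbowPartitions (S.erase y) c := by
  obtain ⟨hpart, hsize, hinj⟩ := mem_rainbowPartitions.mp hP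
  have hne : x ≠ y := by
    rintro rfl
    simpa using hsize _ hxy
  have hyS : y ∈ S :=
    (mem_insert.mp ((hpart.1 _ hxy).1 (mem_insert_of_mem (mem_singleton_self y)))).resolve_left
      hne.symm
  have hS : insert x S \ {x, y} = S.erase y := by
    ext z
    by_cases hzx : z = x <;> simp [hzx, hx, and_comm]
  exact ⟨hyS, fun h => hne (hinj _ hxy (by simp) (by simp) h.symm),
    hS ▸ erase_mem_rainbowPartitions hP hxy⟩

lemma sum_filter_exists_pair_mem (hx : x ∉ S) (a : ℝ) :
    ∑ P ∈ (rainbowPartitions (insert x S) c).filter (fun P => ∃ y, {x, y} ∈ P), a ^ #P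
      = a * ∑ y ∈ S.filter (c · ≠ c x), rainbowGF (S.erase y) c a := by
  simp only [rainbowGF, mul_sum, ← pow_succ']
  rw [sum_sigma']
  symm
  refine sum_bij (fun q _ => insert {x, q.1} q.2) ?_ ?_ ?_ ?_
  · rintro ⟨y, ρ⟩ hq
    obtain ⟨hy, hρ⟩ := mem_sigma.mp hq
    obtain ⟨hyS, hyc⟩ := mem_filter.mp hy
    exact mem_filter.mpr ⟨insert_pair_mem_rainbowPartitions hx hyS hyc hρ, y, mem_insert_self _ _⟩
  · rintro ⟨y, ρ⟩ hq ⟨y', ρ'⟩ hq' h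
    simp only [mem_sigma, mem_filter] at hq hq' h
    obtain ⟨⟨hyS, hyc⟩, hρ⟩ := hq
    have hpart := (mem_rainbowPartitions.mp (insert_pair_mem_rainbowPartitions hx hyS hyc hρ)).1
    have hpair : ({x, y} : Finset α) = {x, y'} := by
      refine hpart.eq_of_mem (mem_insert_self _ _) ?_ (mem_insert_self x _) (mem_insert_self x _)
      exact h ▸ mem_insert_self _ _
    obtain rfl : y = y' := by
      have : y ∈ ({x, y'} : Finset α) := hpair ▸ mem_insert_of_mem (mem_singleton_self y)
      simpa [show y ≠ x by rintro rfl; exact hx hyS] using this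
    have hx' : x ∉ S.erase y := fun h => hx (mem_of_mem_erase h)
    have hρρ' := congrArg (·.erase {x, y}) h
    rw [erase_insert ((mem_rainbowPartitions.mp hρ).1.notMem_of_mem hx' (mem_insert_self x _)),
      erase_insert ((mem_rainbowPartitions.mp hq'.2).1.notMem_of_mem hx' (mem_insert_self x _))]
      at hρρ'
    rw [hρρ']
  · intro P hP
    obtain ⟨hP, y, hyP⟩ := mem_filter.mp hP
    obtain ⟨hyS, hyc, hρ⟩ := erase_pair_mem_rainbowPartitions hx hP hyP
    exact ⟨⟨y, P.erase {x, y}⟩, mem_sigma.mpr ⟨mem_filter.mpr ⟨hyS, hyc⟩, hρ⟩, insert_erase hyP⟩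
  · rintro ⟨y, ρ⟩ hq
    simp only [mem_sigma, mem_filter] at hq
    have hx' : x ∉ S.erase y := fun h => hx (mem_of_mem_erase h)
    rw [card_insert_of_notMem ((mem_rainbowPartitions.mp hq.2).1.notMem_of_mem hx'
      (mem_insert_self x _))]

lemma insert_insert_erase_mem_rainbowPartitions (hx : x ∉ S) (hP : P ∈ rainbowPartitions S c)
    (hb : B ∈ P) (hBc : ∀ y ∈ B, c y ≠ c x) :
    insert (insert x B) (P.erase B) ∈ rainbowPartitions (insert x S) c := by
  obtain ⟨hpart, hsize, hinj⟩ := mem_rainbowPartitions.mp hP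
  have hBS : B ⊆ S := (hpart.1 B hb).1
  have hxB : x ∉ B := fun h => hx (hBS h)
  have hunion : insert x B ∪ S \ B = insert x S := by
    rw [insert_union, union_sdiff_of_subset hBS]
  rw [← hunion]
  refine insert_mem_rainbowPartitions (erase_mem_rainbowPartitions hP hb) ?_ ?_ ?_
  · rw [disjoint_insert_left]
    exact ⟨fun h => hx (mem_sdiff.mp h).1, disjoint_sdiff⟩
  · rw [card_insert_of_notMem hxB]
    exact (hsize B hb).trans (Nat.le_succ _)
  · rw [coe_insert, Set.injOn_insert hxB]
    exact ⟨hinj B hb, fun ⟨y, hy, hyc⟩ => hBc y hy hyc⟩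

lemma exists_insert_insert_erase_eq (hx : x ∉ S) {P' : Finset (Finset α)}
    (hP' : P' ∈ rainbowPartitions (insert x S) c) (hpair : ¬∃ y, {x, y} ∈ P') :
    ∃ P ∈ rainbowPartitions S c, ∃ b ∈ P, (∀ y ∈ b, c y ≠ c x) ∧
      insert (insert x b) (P.erase b) = P' := by
  obtain ⟨hpart, hsize, hinj⟩ := mem_rainbowPartitions.mp hP'
  obtain ⟨B, hB, hxB⟩ := hpart.exists_mem (mem_insert_self x S)
  have hBx : 2 ≤ #(B.erase x) := by
    have hne : #(B.erase x) ≠ 1 := fun h => by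
      obtain ⟨y, hy⟩ := card_eq_one.mp h
      exact hpair ⟨y, by rw [← hy, insert_erase hxB]; exact hB⟩
    have := hsize B hB
    rw [card_erase_of_mem hxB] at hne ⊢
    omega
  have hS : B.erase x ∪ (insert x S \ B) = S := by
    ext z
    have hzB := @(hpart.1 B hB).1 z
    simp only [mem_union, mem_erase, mem_sdiff, mem_insert] at hzB ⊢
    grind
  have hρ := erase_mem_rainbowPartitions hP' hB
  refine ⟨insert (B.erase x) (P'.erase B), ?_, B.erase x, mem_insert_self _ _, ?_, ?_⟩
  · rw [← hS]
    exact insert_mem_rainbowPartitions hρ (disjoint_sdiff.mono_left (erase_subset x B)) hBx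
      ((hinj B hB).mono (erase_subset x B))
  · intro y hy hyc
    exact (mem_erase.mp hy).1 (hinj B hB (mem_of_mem_erase hy) hxB hyc)
  · obtain ⟨z, hz⟩ := card_pos.mp (show 0 < #(B.erase x) by omega)
    rw [erase_insert ((mem_rainbowPartitions.mp hρ).1.notMem_of_mem
      (fun h => (mem_sdiff.mp h).2 (mem_of_mem_erase hz)) hz), insert_erase hxB, insert_erase hB]

lemma insert_notMem_erase (hx : x ∉ S) (hP : P ∈ rainbowPartitions S c) (hb : B ∈ P) :
    insert x B ∉ P.erase B :=
  (mem_rainbowPartitions.mp (erase_mem_rainbowPartitions hP hb)).1.notMem_of_mem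
    (fun h => hx (mem_sdiff.mp h).1) (mem_insert_self x B)

lemma insert_insert_erase_inj (hx : x ∉ S) (hP : P ∈ rainbowPartitions S c) (hb : B ∈ P)
    (hBc : ∀ y ∈ B, c y ≠ c x) {P₂ : Finset (Finset α)} (hP₂ : P₂ ∈ rainbowPartitions S c)
    {B₂ : Finset α} (hb₂ : B₂ ∈ P₂)
    (h : insert (insert x B) (P.erase B) = insert (insert x B₂) (P₂.erase B₂)) :
    P = P₂ ∧ B = B₂ := by
  have hxB {Q : Finset (Finset α)} {b : Finset α} (hQ : Q ∈ rainbowPartitions S c) (hb : b ∈ Q) :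
      x ∉ b := fun h => hx (((mem_rainbowPartitions.mp hQ).1.1 b hb).1 h)
  have hpart :=
    (mem_rainbowPartitions.mp (insert_insert_erase_mem_rainbowPartitions hx hP hb hBc)).1
  have hinsert : insert x B = insert x B₂ := hpart.eq_of_mem (mem_insert_self _ _)
    (h ▸ mem_insert_self _ _) (mem_insert_self x B) (mem_insert_self x B₂)
  obtain rfl : B = B₂ := by
    rw [← erase_insert (hxB hP hb), hinsert, erase_insert (hxB hP₂ hb₂)]
  have hrest := congrArg (·.erase (insert x B)) h
  simp only [erase_insert (insert_notMem_erase hx hP hb),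
    erase_insert (insert_notMem_erase hx hP₂ hb₂)] at hrest
  exact ⟨by rw [← insert_erase hb, hrest, insert_erase hb₂], rfl⟩

lemma sum_filter_not_exists_pair_mem (hx : x ∉ S) (a : ℝ) :
    ∑ P ∈ (rainbowPartitions (insert x S) c).filter (fun P => ¬∃ y, {x, y} ∈ P), a ^ #P
      = ∑ P ∈ rainbowPartitions S c, ((#P : ℝ) - #(S.filter (c · = c x))) * a ^ #P := by
  have hcount : ∀ P ∈ rainbowPartitions S c, ((#P : ℝ) - #(S.filter (c · = c x))) * a ^ #P
      = ∑ _b ∈ P.filter (fun b => ∀ y ∈ b, c y ≠ c x), a ^ #P := by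
    intro P hP
    rw [sum_const, nsmul_eq_mul, ← card_filter_avoid_add_card_filter hP (c x), Nat.cast_add]
    ring
  rw [sum_congr rfl hcount, sum_sigma']
  symm
  refine sum_bij (fun q _ => insert (insert x q.2) (q.1.erase q.2)) ?_ ?_ ?_ ?_
  · rintro ⟨P, b⟩ hq
    simp only [mem_sigma, mem_filter] at hq
    obtain ⟨hP, hb, hbc⟩ := hq
    have hP' := insert_insert_erase_mem_rainbowPartitions hx hP hb hbc
    refine mem_filter.mpr ⟨hP', fun ⟨y, hy⟩ => ?_⟩
    have h2 : #(insert x b) ≤ 2 := by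
      rw [(mem_rainbowPartitions.mp hP').1.eq_of_mem (mem_insert_self _ _) hy (mem_insert_self x b)
        (mem_insert_self x _)]
      exact card_le_two
    have hxb : x ∉ b := fun h => hx (((mem_rainbowPartitions.mp hP).1.1 b hb).1 h)
    have := (mem_rainbowPartitions.mp hP).2.1 b hb
    rw [card_insert_of_notMem hxb] at h2
    omega
  · rintro ⟨P, b⟩ hq ⟨P₂, b₂⟩ hq₂ h
    simp only [mem_sigma, mem_filter] at hq hq₂ h
    obtain ⟨rfl, rfl⟩ := insert_insert_erase_inj hx hq.1 hq.2.1 hq.2.2 hq₂.1 hq₂.2.1 h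
    rfl
  · intro P' hP'
    obtain ⟨hP', hpair⟩ := mem_filter.mp hP'
    obtain ⟨P, hP, b, hb, hbc, rfl⟩ := exists_insert_insert_erase_eq hx hP' hpair
    exact ⟨⟨P, b⟩, mem_sigma.mpr ⟨hP, mem_filter.mpr ⟨hb, hbc⟩⟩, rfl⟩
  · rintro ⟨P, b⟩ hq
    simp only [mem_sigma, mem_filter] at hq
    rw [card_insert_of_notMem (insert_notMem_erase hx hq.1 hq.2.1), card_erase_add_one hq.2.1]

theorem rainbowGF_insert (hx : x ∉ S) (γ : κ) (a : ℝ) :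
    rainbowGF (insert x S) (Function.update c x γ) a
      = ∑ P ∈ rainbowPartitions S c, ((#P : ℝ) - #(S.filter (c · = γ))) * a ^ #P
        + a * ∑ y ∈ S.filter (c · ≠ γ), rainbowGF (S.erase y) c a := by
  have hc : ∀ y ∈ S, Function.update c x γ y = c y := fun y hy =>
    Function.update_of_ne (ne_of_mem_of_not_mem hy hx) _ _
  have heq : S.filter (Function.update c x γ · = γ) = S.filter (c · = γ) :=
    filter_congr fun y hy => by rw [hc y hy]
  have hne : S.filter (Function.update c x γ · ≠ γ) = S.filter (c · ≠ γ) :=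
    filter_congr fun y hy => by rw [hc y hy]
  -- `∃ y, {x, y} ∈ P` says that the block of `x` is a pair: `{x, x}` is too small to be a block.
  rw [rainbowGF, ← sum_filter_not_add_sum_filter _ (fun P => ∃ y, {x, y} ∈ P),
    sum_filter_not_exists_pair_mem hx, sum_filter_exists_pair_mem hx, Function.update_self,
    rainbowPartitions_congr hc, heq, hne]
  congr 2
  exact sum_congr rfl fun y _ => rainbowGF_congr (fun z hz => hc z (mem_of_mem_erase hz)) a

end RainbowPartitions

section Boxes
variable {m : ℕ}

lemma psum_eq_sum_castLE (n : Fin m → ℕ) (j : Fin m) :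
    psum n j = ∑ i : Fin j, n (Fin.castLE j.2.le i) := by
  rw [psum, ← sum_filter]
  have : univ.filter (· < j) = (univ : Finset (Fin j)).map (Fin.castLEEmb j.2.le) := by
    ext t
    simp only [mem_filter, mem_univ, true_and, mem_map, Fin.castLEEmb_apply]
    exact ⟨fun h => ⟨⟨t, h⟩, rfl⟩, by rintro ⟨i, rfl⟩; exact i.2⟩
  rw [this, sum_map]
  rfl

lemma inBox_iff_exists (n : Fin m → ℕ) (j : Fin m) (i : ℕ) :
    inBox n j i ↔ ∃ r : Fin (n j), (finSigmaFinEquiv ⟨j, r⟩ : ℕ) = i := by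
  simp only [inBox, finSigmaFinEquiv_apply, ← psum_eq_sum_castLE]
  constructor
  · rintro ⟨h1, h2⟩
    exact ⟨⟨i - psum n j, by omega⟩, by simp only; omega⟩
  · rintro ⟨r, rfl⟩
    omega

-- junk value `0` for `i ≥ total n`
noncomputable def boxIndex (n : Fin m → ℕ) (i : ℕ) : ℕ :=
  if h : i < ∑ t, n t then (finSigmaFinEquiv.symm ⟨i, h⟩).1 else 0

lemma boxIndex_val (n : Fin m → ℕ) (x : Fin (∑ t, n t)) :
    boxIndex n x = (finSigmaFinEquiv.symm x).1 := by
  simp [boxIndex, x.2]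

lemma inBox_iff (n : Fin m → ℕ) (j : Fin m) (i : ℕ) :
    inBox n j i ↔ i < total n ∧ boxIndex n i = j := by
  rw [inBox_iff_exists]
  constructor
  · rintro ⟨r, rfl⟩
    rw [boxIndex_val, Equiv.symm_apply_apply]
    exact ⟨(finSigmaFinEquiv _).2, rfl⟩
  · rintro ⟨h, hj⟩
    obtain ⟨x, rfl⟩ : ∃ x : Fin (∑ t, n t), (x : ℕ) = i := ⟨⟨i, h⟩, rfl⟩
    rw [boxIndex_val] at hj
    obtain ⟨⟨j', r⟩, rfl⟩ := finSigmaFinEquiv.surjective x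
    rw [Equiv.symm_apply_apply] at hj
    obtain rfl : j' = j := Fin.ext hj
    exact ⟨r, rfl⟩

lemma boxIndex_lt (n : Fin m → ℕ) {i : ℕ} (hi : i < total n) : boxIndex n i < m := by
  obtain ⟨x, rfl⟩ : ∃ x : Fin (∑ t, n t), (x : ℕ) = i := ⟨⟨i, hi⟩, rfl⟩
  rw [boxIndex_val]
  exact Fin.isLt _

lemma sameBox_iff {n : Fin m → ℕ} {i k : ℕ} (hi : i < total n) (hk : k < total n) :
    sameBox n i k ↔ boxIndex n i = boxIndex n k := by
  simp only [sameBox, inBox_iff]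
  constructor
  · rintro ⟨j, ⟨-, hij⟩, -, hkj⟩
    rw [hij, hkj]
  · intro h
    exact ⟨⟨_, boxIndex_lt n hi⟩, ⟨hi, rfl⟩, hk, h.symm⟩

lemma card_filter_boxIndex_eq (n : Fin m → ℕ) (j : Fin m) :
    #((range (total n)).filter (boxIndex n · = j)) = n j := by
  have : (range (total n)).filter (boxIndex n · = j) = Ico (psum n j) (psum n j + n j) := by
    ext i
    simp only [mem_filter, mem_range, mem_Ico, ← inBox_iff]
    rfl
  rw [this, Nat.card_Ico]
  omega

end Boxes

section Charlier
variable {m : ℕ}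

lemma inhomPartitions_eq_rainbowPartitions (n : Fin m → ℕ) :
    inhomPartitions n = rainbowPartitions (range (total n)) (boxIndex n) := by
  ext P
  rw [inhomPartitions, mem_filter, mem_rainbowPartitions]
  have hlt {b : Finset ℕ} (hP : IsPartitionOn (range (total n)) P) (hb : b ∈ P) {i : ℕ}
      (hi : i ∈ b) : i < total n :=
    mem_range.mp ((hP.1 b hb).1 hi)
  constructor
  · rintro ⟨-, hP, hsize, hinh⟩
    refine ⟨hP, hsize, fun b hb i hi k hk hik => ?_⟩
    by_contra hne
    exact hinh b hb i hi k hk hne ((sameBox_iff (hlt hP hb hi) (hlt hP hb hk)).mpr hik)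
  · rintro ⟨hP, hsize, hinj⟩
    refine ⟨mem_powerset.mpr fun b hb => mem_powerset.mpr (hP.1 b hb).1, hP, hsize,
      fun b hb i hi k hk hik hsame => hik (hinj b hb hi hk ?_)⟩
    exact (sameBox_iff (hlt hP hb hi) (hlt hP hb hk)).mp hsame

lemma charlierGF_eq_rainbowGF_of_card_filter_eq (n : Fin m → ℕ) {S : Finset ℕ} {c : ℕ → ℕ}
    (hc : ∀ x ∈ S, c x < m) (hS : ∀ j : Fin m, #(S.filter (c · = j)) = n j) (a : ℝ) :
    charlierGF n a = rainbowGF S c a := by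
  rw [charlierGF, inhomPartitions_eq_rainbowPartitions, ← rainbowGF]
  refine rainbowGF_eq_of_card_filter_eq (fun γ => ?_) a
  by_cases hγ : γ < m
  · exact (card_filter_boxIndex_eq n ⟨γ, hγ⟩).trans (hS ⟨γ, hγ⟩).symm
  · rw [filter_false_of_mem fun x hx (h : boxIndex n x = γ) =>
      hγ (h ▸ boxIndex_lt n (mem_range.mp hx)),
      filter_false_of_mem fun x hx (h : c x = γ) => hγ (h ▸ hc x hx)]

lemma charlierGF_update_add_one_eq_rainbowGF (n : Fin m → ℕ) (j : Fin m) (a : ℝ) :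
    charlierGF (Function.update n j (n j + 1)) a
      = rainbowGF (insert (total n) (range (total n)))
          (Function.update (boxIndex n) (total n) j) a := by
  have hc : ∀ x ∈ range (total n), Function.update (boxIndex n) (total n) j x = boxIndex n x :=
    fun x hx => Function.update_of_ne (mem_range.mp hx).ne _ _
  refine charlierGF_eq_rainbowGF_of_card_filter_eq _ (fun x hx => ?_) (fun t => ?_) a
  · rcases mem_insert.mp hx with rfl | hx
    · rw [Function.update_self]
      exact j.2
    · rw [hc x hx]
      exact boxIndex_lt n (mem_range.mp hx)
  · rw [filter_insert, Function.update_self, filter_congr fun x hx => by rw [hc x hx]]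
    by_cases htj : t = j
    · subst htj
      rw [if_pos rfl, card_insert_of_notMem fun h => notMem_range_self (mem_filter.mp h).1,
        card_filter_boxIndex_eq, Function.update_self]
    · rw [if_neg fun h => htj (Fin.ext h).symm, card_filter_boxIndex_eq,
        Function.update_of_ne htj]

lemma rainbowGF_erase_eq_charlierGF (n : Fin m → ℕ) {y : ℕ} (hy : y < total n) {j : Fin m}
    (hj : boxIndex n y = j) (a : ℝ) :
    rainbowGF ((range (total n)).erase y) (boxIndex n) a
      = charlierGF (Function.update n j (n j - 1)) a := by
  refine (charlierGF_eq_rainbowGF_of_card_filter_eq _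
    (fun x hx => boxIndex_lt n (mem_range.mp (mem_of_mem_erase hx))) (fun t => ?_) a).symm
  rw [filter_erase]
  by_cases htj : t = j
  · subst htj
    rw [card_erase_of_mem (mem_filter.mpr ⟨mem_range.mpr hy, hj⟩), card_filter_boxIndex_eq,
      Function.update_self]
  · rw [erase_eq_of_notMem fun h => htj (Fin.ext ((mem_filter.mp h).2.symm.trans hj)),
      card_filter_boxIndex_eq, Function.update_of_ne htj]

lemma sum_filter_rainbowGF_erase (n : Fin m → ℕ) (j : Fin m) (a : ℝ) :
    ∑ y ∈ (range (total n)).filter (boxIndex n · = j),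
        rainbowGF ((range (total n)).erase y) (boxIndex n) a
      = n j * charlierGF (Function.update n j (n j - 1)) a := by
  rw [sum_congr rfl fun y hy => rainbowGF_erase_eq_charlierGF n
      (mem_range.mp (mem_filter.mp hy).1) (mem_filter.mp hy).2 a,
    sum_const, card_filter_boxIndex_eq, nsmul_eq_mul]

lemma sum_rainbowGF_erase (n : Fin m → ℕ) (a : ℝ) :
    ∑ y ∈ range (total n), rainbowGF ((range (total n)).erase y) (boxIndex n) a
      = ∑ j, n j * charlierGF (Function.update n j (n j - 1)) a := by
  rw [← sum_fiberwise_of_maps_to (g := boxIndex n) (t := univ.map Fin.valEmbedding)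
    fun y hy => mem_map.mpr ⟨⟨_, boxIndex_lt n (mem_range.mp hy)⟩, mem_univ _, rfl⟩, sum_map]
  exact sum_congr rfl fun j _ => sum_filter_rainbowGF_erase n j a

theorem charlierGF_update_add_one (n : Fin m → ℕ) (j : Fin m) (a : ℝ) :
    charlierGF (Function.update n j (n j + 1)) a
      = ∑ P ∈ inhomPartitions n, (#P : ℝ) * a ^ #P - n j * charlierGF n a
        + a * (∑ t, n t * charlierGF (Function.update n t (n t - 1)) a
          - n j * charlierGF (Function.update n j (n j - 1)) a) := by
  have hsplit := sum_filter_not_add_sum_filter (range (total n)) (boxIndex n · = j)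
    fun y => rainbowGF ((range (total n)).erase y) (boxIndex n) a
  rw [charlierGF_update_add_one_eq_rainbowGF, rainbowGF_insert notMem_range_self,
    ← inhomPartitions_eq_rainbowPartitions, card_filter_boxIndex_eq, ← sum_rainbowGF_erase,
    ← sum_filter_rainbowGF_erase, ← hsplit, add_sub_cancel_right, charlierGF,
    mul_sum (inhomPartitions n), ← sum_sub_distrib]
  simp only [sub_mul, ne_eq]

end Charlier

theorem charlier_difference_system_general {m : ℕ} (n : Fin m → ℕ) (j k : Fin m) (a : ℝ) :
    charlierGF (Function.update n j (n j + 1)) a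
        - charlierGF (Function.update n k (n k + 1)) a
      = ((n k : ℝ) - (n j : ℝ)) * charlierGF n a
        + a * (n k : ℝ) * charlierGF (Function.update n k (n k - 1)) a
        - a * (n j : ℝ) * charlierGF (Function.update n j (n j - 1)) a := by
  rw [charlierGF_update_add_one n j, charlierGF_update_add_one n k]
  ring

/-- the difference system satisfied by the generating polynomials of
inhomogeneous set partitions counted by number of blocks. -/
theorem charlier_difference_system {m : ℕ} (n : Fin m → ℕ) (j k : Fin m) (hjk : j ≠ k)
    (a : ℝ) :
    charlierGF (Function.update n j (n j + 1)) a
        - charlierGF (Function.update n k (n k + 1)) a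
      = ((n k : ℝ) - (n j : ℝ)) * charlierGF n a
        + a * (n k : ℝ) * charlierGF (Function.update n k (n k - 1)) a
        - a * (n j : ℝ) * charlierGF (Function.update n j (n j - 1)) a :=
  charlier_difference_system_general n j k a

end Paper
end

section
/- Let n = (n_1,…,n_m) be a tuple of nonnegative integers with N = n_1+⋯+n_m and, for a real number q, let K(n|q) = Σ_M q^{cr(M)}, the sum over all inhomogeneous perfect matchings M of [N] with respect to the boxes determined by n, where cr(M) is the number of crossings of M. Then for all j ≠ k in {1,…,m} and all real q: K_j^+(n|q) − K_k^+(n|q) = [n_k]_q K_k^-(n|q) − [n_j]_q K_j^-(n|q), where [n]_q = 1 + q + ⋯ + q^{n-1} and a term [n_j]_q K_j^-(n|q) is interpreted as 0 when n_j = 0. -/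
open Finset MeasureTheory
open scoped Classical

namespace Paper

/-- `(i,j)` is an arc of the partition `P`: `i < j` lie in a common block with
no block element strictly between them. -/
def IsArc (P : Finset (Finset ℕ)) (i j : ℕ) : Prop :=
  i < j ∧ ∃ b ∈ P, i ∈ b ∧ j ∈ b ∧ ∀ t ∈ b, ¬ (i < t ∧ t < j)

/-- Number of crossings of a set partition of `[N]`: pairs of arcs `(i,j)`, `(k,l)`
with `i < k < j < l`. -/
noncomputable def crossNum (N : ℕ) (P : Finset (Finset ℕ)) : ℕ :=
  (((Finset.range N ×ˢ Finset.range N) ×ˢ (Finset.range N ×ˢ Finset.range N)).filter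
    (fun q => IsArc P q.1.1 q.1.2 ∧ IsArc P q.2.1 q.2.2 ∧
      q.1.1 < q.2.1 ∧ q.2.1 < q.1.2 ∧ q.1.2 < q.2.2)).card

/-- `[n]_q = 1 + q + ⋯ + q^{n-1}`. -/
def qInt (q : ℝ) (n : ℕ) : ℝ := ∑ t ∈ Finset.range n, q ^ t

/-- `K(n|q) = Σ_M q^{cr(M)}` over inhomogeneous perfect matchings. -/
noncomputable def Kq {m : ℕ} (n : Fin m → ℕ) (q : ℝ) : ℝ :=
  ∑ P ∈ matchings n, q ^ crossNum (total n) P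

/-!
Add to `[N]` an extra point `c` lying in no box, placed at an end of box `j`, and sort the
inhomogeneous matchings of the `N + 1` points by the partner of `c`. If `c` is not matched into
box `j`, it may as well belong to box `j`: these matchings give `K_j^+`. If `c` is matched to a
point `x` of box `j`, all points strictly between `x` and `c` lie in box `j` and are therefore
matched outside, so the arc `{x, c}` has exactly `|x - c| - 1` crossings; contracting it leaves an
arbitrary matching for `n_j - 1`, and summing over `x` gives `[n_j]_q K_j^-`. The point between
boxes `j` and `j + 1` ends the one and starts the other, so `K_j^+ + [n_j]_q K_j^-` does not
depend on `j`.
-/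

variable {m : ℕ}

section Boxes

variable {n : Fin m → ℕ} {j t : Fin m}

lemma psum_eq_sum_Iio (n : Fin m → ℕ) (j : Fin m) : psum n j = ∑ s ∈ Iio j, n s := by
  rw [psum, ← Finset.sum_filter]
  congr 1
  ext s
  simp

lemma psum_add_self (n : Fin m → ℕ) (j : Fin m) : psum n j + n j = ∑ s ∈ Iic j, n s := by
  rw [psum_eq_sum_Iio, ← Finset.Iio_insert, Finset.sum_insert (by simp), add_comm]

lemma psum_add_self_le_psum (n : Fin m → ℕ) (h : j < t) : psum n j + n j ≤ psum n t := by
  rw [psum_add_self, psum_eq_sum_Iio]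
  exact Finset.sum_le_sum_of_subset fun s hs => Finset.mem_Iio.2 ((Finset.mem_Iic.1 hs).trans_lt h)

lemma psum_add_self_le_total (n : Fin m → ℕ) (j : Fin m) : psum n j + n j ≤ total n := by
  rw [psum_add_self, total]
  exact Finset.sum_le_sum_of_subset (Finset.subset_univ _)

lemma psum_succ (n : Fin (m + 1) → ℕ) (i : Fin m) :
    psum n i.succ = psum n i.castSucc + n i.castSucc := by
  rw [psum_add_self, psum_eq_sum_Iio]
  rfl

lemma psum_update_of_le (v : ℕ) (h : t ≤ j) : psum (Function.update n j v) t = psum n t := by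
  simp only [psum_eq_sum_Iio]
  exact Finset.sum_congr rfl fun s hs =>
    Function.update_of_ne ((Finset.mem_Iio.1 hs).trans_le h).ne _ _

lemma psum_update_of_lt (v : ℕ) (h : j < t) :
    psum (Function.update n j v) t + n j = psum n t + v := by
  simp only [psum_eq_sum_Iio]
  rw [Finset.sum_update_of_mem (Finset.mem_Iio.2 h),
    ← Finset.sum_erase_add _ _ (Finset.mem_Iio.2 h), Finset.sdiff_singleton_eq_erase]
  ring

lemma total_update (v : ℕ) : total (Function.update n j v) + n j = total n + v := by
  simp only [total]
  rw [Finset.sum_update_of_mem (Finset.mem_univ j),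
    ← Finset.sum_erase_add _ _ (Finset.mem_univ j), Finset.sdiff_singleton_eq_erase]
  ring

end Boxes

/-- `collapse c` maps `ℕ ∖ {c}` order-isomorphically onto `ℕ`; `uncollapse c` is its inverse. -/
def collapse (c z : ℕ) : ℕ := if z < c then z else z - 1

def uncollapse (c z : ℕ) : ℕ := if z < c then z else z + 1

lemma uncollapse_collapse {c z : ℕ} (hz : z ≠ c) : uncollapse c (collapse c z) = z := by
  unfold collapse uncollapse; split_ifs <;> omega

/-- The boxes of `n`, read on `[N + 1]` with an extra point `c` that lies in no box. -/
def sameBoxOmitting (n : Fin m → ℕ) (c i k : ℕ) : Prop :=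
  i ≠ c ∧ k ≠ c ∧ sameBox n (collapse c i) (collapse c k)

section BoxUpdate

variable {n : Fin m → ℕ} {j : Fin m}

lemma inBox_unique {t t' : Fin m} {z : ℕ} (h : inBox n t z) (h' : inBox n t' z) : t = t' := by
  by_contra hne
  rcases lt_or_gt_of_ne hne with hlt | hlt
  · have := psum_add_self_le_psum n hlt; unfold inBox at h h'; omega
  · have := psum_add_self_le_psum n hlt; unfold inBox at h h'; omega

/-- Deleting the point `y` of box `j` shifts every later point down by one. -/
lemma inBox_update_sub_one_iff {y : ℕ} (hy : inBox n j y) (t : Fin m) (z : ℕ) :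
    inBox (Function.update n j (n j - 1)) t z ↔ inBox n t (uncollapse y z) := by
  unfold inBox at hy ⊢
  rcases lt_trichotomy t j with h | rfl | h
  · have := psum_add_self_le_psum n h
    rw [psum_update_of_le _ h.le, Function.update_of_ne h.ne]
    unfold uncollapse; split_ifs <;> omega
  · rw [psum_update_of_le _ le_rfl, Function.update_self]
    unfold uncollapse; split_ifs <;> omega
  · have := psum_add_self_le_psum n h
    have := psum_update_of_lt (n := n) (n j - 1) h
    rw [Function.update_of_ne h.ne']
    unfold uncollapse; split_ifs <;> omega

lemma sameBox_update_sub_one_iff {y : ℕ} (hy : inBox n j y) (z u : ℕ) :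
    sameBox (Function.update n j (n j - 1)) z u ↔
      sameBox n (uncollapse y z) (uncollapse y u) :=
  exists_congr fun t =>
    and_congr (inBox_update_sub_one_iff hy t z) (inBox_update_sub_one_iff hy t u)

variable {c : ℕ}

lemma inBox_collapse_iff (hc : c ∈ Icc (psum n j) (psum n j + n j)) {z : ℕ} (hz : z ≠ c) :
    inBox n j (collapse c z) ↔ z ∈ Icc (psum n j) (psum n j + n j) := by
  rw [Finset.mem_Icc] at hc ⊢
  unfold inBox collapse; split_ifs <;> omega

lemma sameBoxOmitting_of_mem_Icc (hc : c ∈ Icc (psum n j) (psum n j + n j)) {z u : ℕ}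
    (hz : z ∈ Icc (psum n j) (psum n j + n j)) (hu : u ∈ Icc (psum n j) (psum n j + n j))
    (hzc : z ≠ c) (huc : u ≠ c) :
    sameBoxOmitting n c z u :=
  ⟨hzc, huc, j, (inBox_collapse_iff hc hzc).2 hz, (inBox_collapse_iff hc huc).2 hu⟩

lemma inBox_update_add_one_self_iff (z : ℕ) :
    inBox (Function.update n j (n j + 1)) j z ↔ z ∈ Icc (psum n j) (psum n j + n j) := by
  unfold inBox
  rw [psum_update_of_le _ le_rfl, Function.update_self, Finset.mem_Icc]
  omega

lemma inBox_update_add_one_iff_of_ne (hc : c ∈ Icc (psum n j) (psum n j + n j)) {t : Fin m}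
    (ht : t ≠ j) (z : ℕ) :
    inBox (Function.update n j (n j + 1)) t z ↔ z ≠ c ∧ inBox n t (collapse c z) := by
  set n' := Function.update n j (n j + 1)
  have hc' : inBox n' j c := (inBox_update_add_one_self_iff c).2 hc
  have hn : Function.update n' j (n' j - 1) = n := by simp [n']
  constructor
  · intro hz
    have hzc : z ≠ c := by rintro rfl; exact ht (inBox_unique hz hc')
    refine ⟨hzc, ?_⟩
    rwa [← hn, inBox_update_sub_one_iff hc', uncollapse_collapse hzc]
  · rintro ⟨hzc, hz⟩
    rwa [← hn, inBox_update_sub_one_iff hc', uncollapse_collapse hzc] at hz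

lemma sameBox_update_add_one_iff (hc : c ∈ Icc (psum n j) (psum n j + n j)) (i k : ℕ) :
    sameBox (Function.update n j (n j + 1)) i k ↔ sameBoxOmitting n c i k ∨
      (i ∈ Icc (psum n j) (psum n j + n j) ∧ k ∈ Icc (psum n j) (psum n j + n j)) := by
  constructor
  · rintro ⟨t, hi, hk⟩
    by_cases ht : t = j
    · subst ht
      exact Or.inr ⟨(inBox_update_add_one_self_iff i).1 hi,
        (inBox_update_add_one_self_iff k).1 hk⟩
    · obtain ⟨hic, hi⟩ := (inBox_update_add_one_iff_of_ne hc ht i).1 hi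
      obtain ⟨hkc, hk⟩ := (inBox_update_add_one_iff_of_ne hc ht k).1 hk
      exact Or.inl ⟨hic, hkc, t, hi, hk⟩
  · rintro (⟨hic, hkc, t, hi, hk⟩ | ⟨hi, hk⟩)
    · by_cases ht : t = j
      · subst ht
        exact ⟨t, (inBox_update_add_one_self_iff i).2 ((inBox_collapse_iff hc hic).1 hi),
          (inBox_update_add_one_self_iff k).2 ((inBox_collapse_iff hc hkc).1 hk)⟩
      · exact ⟨t, (inBox_update_add_one_iff_of_ne hc ht i).2 ⟨hic, hi⟩,
          (inBox_update_add_one_iff_of_ne hc ht k).2 ⟨hkc, hk⟩⟩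
    · exact ⟨j, (inBox_update_add_one_self_iff i).2 hi,
        (inBox_update_add_one_self_iff k).2 hk⟩

end BoxUpdate

def IsMatching (N : ℕ) (P : Finset (Finset ℕ)) : Prop :=
  IsPartitionOf N P ∧ ∀ b ∈ P, b.card = 2

def Avoids (R : ℕ → ℕ → Prop) (P : Finset (Finset ℕ)) : Prop :=
  ∀ b ∈ P, ∀ i ∈ b, ∀ k ∈ b, i ≠ k → ¬ R i k

noncomputable def matchingsAvoiding (N : ℕ) (R : ℕ → ℕ → Prop) : Finset (Finset (Finset ℕ)) :=
  ((range N).powerset.powerset).filter fun P => IsMatching N P ∧ Avoids R P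

noncomputable def crossPoly (N : ℕ) (R : ℕ → ℕ → Prop) (q : ℝ) : ℝ :=
  ∑ P ∈ matchingsAvoiding N R, q ^ crossNum N P

def Crosses (P : Finset (Finset ℕ)) (x : (ℕ × ℕ) × ℕ × ℕ) : Prop :=
  {x.1.1, x.1.2} ∈ P ∧ {x.2.1, x.2.2} ∈ P ∧ x.1.1 < x.2.1 ∧ x.2.1 < x.1.2 ∧ x.1.2 < x.2.2

noncomputable def crossings (N : ℕ) (P : Finset (Finset ℕ)) : Finset ((ℕ × ℕ) × ℕ × ℕ) :=
  ((range N ×ˢ range N) ×ˢ (range N ×ˢ range N)).filter (Crosses P)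

section Matchings

variable {N : ℕ} {P : Finset (Finset ℕ)} {R : ℕ → ℕ → Prop}

lemma mem_matchingsAvoiding : P ∈ matchingsAvoiding N R ↔ IsMatching N P ∧ Avoids R P := by
  rw [matchingsAvoiding, Finset.mem_filter, Finset.mem_powerset, and_iff_right_iff_imp]
  exact fun h b hb => Finset.mem_powerset.2 (h.1.1.1 b hb).1

lemma matchings_eq_matchingsAvoiding (n : Fin m → ℕ) :
    matchings n = matchingsAvoiding (total n) (sameBox n) :=
  Finset.filter_congr fun _ _ => (and_assoc).symm

lemma Kq_eq_crossPoly (n : Fin m → ℕ) (q : ℝ) :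
    Kq n q = crossPoly (total n) (sameBox n) q := by
  rw [Kq, crossPoly, matchings_eq_matchingsAvoiding]

lemma isMatching_iff : IsMatching N P ↔
    (∀ s ∈ P, (s ⊆ range N ∧ s.Nonempty) ∧ s.card = 2) ∧
      ∀ z ∈ range N, (P.filter (z ∈ ·)).card = 1 := by
  simp only [IsMatching, IsPartitionOf, forall_and]
  tauto

namespace IsPartitionOf

lemma eq_of_mem (hP : IsPartitionOf N P) {b b' : Finset ℕ} (hb : b ∈ P) (hb' : b' ∈ P)
    {x : ℕ} (hx : x ∈ b) (hx' : x ∈ b') : b = b' :=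
  Finset.card_le_one.1 (hP.2 x ((hP.1 b hb).1 hx)).le b (Finset.mem_filter.2 ⟨hb, hx⟩) b'
    (Finset.mem_filter.2 ⟨hb', hx'⟩)

lemma exists_mem (hP : IsPartitionOf N P) {x : ℕ} (hx : x < N) : ∃ b ∈ P, x ∈ b := by
  obtain ⟨b, hb⟩ := Finset.card_pos.1 ((hP.2 x (Finset.mem_range.2 hx)).symm ▸ Nat.one_pos)
  exact ⟨b, (Finset.mem_filter.1 hb).1, (Finset.mem_filter.1 hb).2⟩

lemma eq_of_pair_mem (hP : IsPartitionOf N P) {x y z : ℕ} (hy : {x, y} ∈ P)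
    (hz : {x, z} ∈ P) : y = z := by
  have h := hP.eq_of_mem hy hz (x := x) (by simp) (by simp)
  have hzy : z ∈ ({x, y} : Finset ℕ) := h ▸ by simp
  have hyz : y ∈ ({x, z} : Finset ℕ) := h ▸ by simp
  simp only [Finset.mem_insert, Finset.mem_singleton] at hzy hyz
  omega

lemma lt_of_pair_mem (hP : IsPartitionOf N P) {x y : ℕ} (h : {x, y} ∈ P) : x < N :=
  Finset.mem_range.1 ((hP.1 _ h).1 (by simp))

end IsPartitionOf

namespace IsMatching

lemma ne_of_pair_mem (hP : IsMatching N P) {x y : ℕ} (h : {x, y} ∈ P) : x ≠ y := by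
  rintro rfl
  simpa using hP.2 _ h

lemma eq_pair (hP : IsMatching N P) {b : Finset ℕ} (hb : b ∈ P) {i k : ℕ} (hi : i ∈ b)
    (hk : k ∈ b) (hik : i ≠ k) : b = {i, k} :=
  (Finset.eq_of_subset_of_card_le (Finset.insert_subset hi (Finset.singleton_subset_iff.2 hk))
    (by rw [hP.2 b hb, Finset.card_pair hik])).symm

lemma exists_pair_mem (hP : IsMatching N P) {x : ℕ} (hx : x < N) : ∃ y, {x, y} ∈ P := by
  obtain ⟨b, hb, hxb⟩ := hP.1.exists_mem hx
  obtain ⟨u, v, huv, rfl⟩ := Finset.card_eq_two.1 (hP.2 b hb)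
  simp only [Finset.mem_insert, Finset.mem_singleton] at hxb
  rcases hxb with rfl | rfl
  · exact ⟨v, hb⟩
  · exact ⟨u, Finset.pair_comm x u ▸ hb⟩

lemma pair_eq_of_mem (hP : IsMatching N P) {x y a b : ℕ} (hxy : {x, y} ∈ P) (hab : {a, b} ∈ P)
    (h : x = a ∨ x = b ∨ y = a ∨ y = b) : (x = a ∧ y = b) ∨ (x = b ∧ y = a) := by
  rcases h with rfl | rfl | rfl | rfl
  · exact Or.inl ⟨rfl, hP.1.eq_of_pair_mem hxy hab⟩
  · exact Or.inr ⟨rfl, hP.1.eq_of_pair_mem hxy (Finset.pair_comm a x ▸ hab)⟩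
  · exact Or.inr ⟨hP.1.eq_of_pair_mem (Finset.pair_comm x y ▸ hxy) hab, rfl⟩
  · exact Or.inl ⟨hP.1.eq_of_pair_mem (Finset.pair_comm x y ▸ hxy)
      (Finset.pair_comm a y ▸ hab), rfl⟩

lemma avoids_iff (hP : IsMatching N P) : Avoids R P ↔ ∀ x y, {x, y} ∈ P → ¬ R x y := by
  constructor
  · exact fun h x y hxy => h _ hxy x (by simp) y (by simp) (hP.ne_of_pair_mem hxy)
  · intro h b hb i hi k hk hik
    exact h i k (hP.eq_pair hb hi hk hik ▸ hb)

lemma isArc_iff (hP : IsMatching N P) {i k : ℕ} : IsArc P i k ↔ i < k ∧ {i, k} ∈ P := by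
  constructor
  · rintro ⟨hik, b, hb, hi, hk, -⟩
    exact ⟨hik, hP.eq_pair hb hi hk hik.ne ▸ hb⟩
  · rintro ⟨hik, h⟩
    refine ⟨hik, {i, k}, h, by simp, by simp, fun t ht => ?_⟩
    simp only [Finset.mem_insert, Finset.mem_singleton] at ht
    omega

lemma crossNum_eq_card (hP : IsMatching N P) : crossNum N P = (crossings N P).card := by
  rw [crossNum, crossings]
  congr 1
  refine Finset.filter_congr fun x _ => ?_
  simp only [Crosses, hP.isArc_iff]
  constructor
  · rintro ⟨⟨-, h1⟩, ⟨-, h2⟩, h⟩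
    exact ⟨h1, h2, h⟩
  · rintro ⟨h1, h2, h⟩
    exact ⟨⟨by omega, h1⟩, ⟨by omega, h2⟩, h⟩

lemma mem_crossings_iff (hP : IsMatching N P) {x : (ℕ × ℕ) × ℕ × ℕ} :
    x ∈ crossings N P ↔ Crosses P x := by
  rw [crossings, Finset.mem_filter, and_iff_right_iff_imp]
  rintro ⟨h1, h2, -⟩
  simp only [Finset.mem_product, Finset.mem_range]
  exact ⟨⟨hP.1.lt_of_pair_mem h1, hP.1.lt_of_pair_mem (Finset.pair_comm x.1.1 x.1.2 ▸ h1)⟩,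
    hP.1.lt_of_pair_mem h2, hP.1.lt_of_pair_mem (Finset.pair_comm x.2.1 x.2.2 ▸ h2)⟩

end IsMatching

end Matchings

/-- `squeeze a b` maps `ℕ ∖ {a, b}` order-isomorphically onto `ℕ` (for `a < b`);
`unsqueeze a b` is its inverse. -/
def squeeze (a b z : ℕ) : ℕ := if z < a then z else if z < b then z - 1 else z - 2

def unsqueeze (a b z : ℕ) : ℕ := if z < a then z else if z + 1 < b then z + 1 else z + 2

noncomputable def insertArc (a b : ℕ) (P : Finset (Finset ℕ)) : Finset (Finset ℕ) :=
  insert {a, b} (P.image (Finset.image (unsqueeze a b)))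

noncomputable def contractArc (a b : ℕ) (P : Finset (Finset ℕ)) : Finset (Finset ℕ) :=
  (P.erase {a, b}).image (Finset.image (squeeze a b))

section ArcInsertion

variable {a b N : ℕ} {P : Finset (Finset ℕ)}

lemma squeeze_unsqueeze (z : ℕ) : squeeze a b (unsqueeze a b z) = z := by
  unfold squeeze unsqueeze; split_ifs <;> omega

lemma unsqueeze_squeeze (hab : a < b) {z : ℕ} (hza : z ≠ a) (hzb : z ≠ b) :
    unsqueeze a b (squeeze a b z) = z := by
  unfold squeeze unsqueeze; split_ifs <;> omega

lemma unsqueeze_ne_left (z : ℕ) : unsqueeze a b z ≠ a := by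
  unfold unsqueeze; split_ifs <;> omega

lemma unsqueeze_ne_right (hab : a < b) (z : ℕ) : unsqueeze a b z ≠ b := by
  unfold unsqueeze; split_ifs <;> omega

lemma unsqueeze_strictMono : StrictMono (unsqueeze a b) := by
  intro x y hxy
  unfold unsqueeze; split_ifs <;> omega

lemma unsqueeze_lt_add_two_iff (hab : a < b) (hbN : b < N + 2) {z : ℕ} :
    unsqueeze a b z < N + 2 ↔ z < N := by
  unfold unsqueeze; split_ifs <;> omega

lemma image_unsqueeze_injective : Function.Injective (Finset.image (unsqueeze a b)) :=
  Finset.image_injective unsqueeze_strictMono.injective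

lemma mem_image_unsqueeze_iff (hab : a < b) {s : Finset ℕ} {z : ℕ} (hza : z ≠ a) (hzb : z ≠ b) :
    z ∈ s.image (unsqueeze a b) ↔ squeeze a b z ∈ s := by
  constructor
  · rintro h
    obtain ⟨y, hy, rfl⟩ := Finset.mem_image.1 h
    rwa [squeeze_unsqueeze]
  · exact fun h => Finset.mem_image.2 ⟨_, h, unsqueeze_squeeze hab hza hzb⟩

lemma not_mem_image_unsqueeze (hab : a < b) {s : Finset ℕ} {z : ℕ} (hz : z = a ∨ z = b) :
    z ∉ s.image (unsqueeze a b) := by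
  intro h
  obtain ⟨y, -, rfl⟩ := Finset.mem_image.1 h
  exact hz.elim (unsqueeze_ne_left y) (unsqueeze_ne_right hab y)

lemma pair_not_mem_image_image_unsqueeze (hab : a < b) :
    {a, b} ∉ P.image (Finset.image (unsqueeze a b)) := by
  intro h
  obtain ⟨s, -, hs⟩ := Finset.mem_image.1 h
  exact not_mem_image_unsqueeze hab (s := s) (Or.inl rfl) (by rw [hs]; simp)

lemma contractArc_insertArc (hab : a < b) (P : Finset (Finset ℕ)) :
    contractArc a b (insertArc a b P) = P := by
  rw [contractArc, insertArc, Finset.erase_insert (pair_not_mem_image_image_unsqueeze hab),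
    Finset.image_image]
  conv_rhs => rw [← Finset.image_id (s := P)]
  refine Finset.image_congr fun s _ => ?_
  simp [Finset.image_image, Function.comp_def, squeeze_unsqueeze]

lemma insertArc_contractArc (hP : IsPartitionOf N P) (hab : a < b) (hmem : {a, b} ∈ P) :
    insertArc a b (contractArc a b P) = P := by
  rw [insertArc, contractArc, Finset.image_image]
  conv_rhs => rw [← Finset.insert_erase hmem, ← Finset.image_id (s := P.erase {a, b})]
  congr 1
  refine Finset.image_congr fun s hs => ?_
  obtain ⟨hne, hsP⟩ := Finset.mem_erase.1 (Finset.mem_coe.1 hs)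
  have avoid : ∀ z ∈ s, z ≠ a ∧ z ≠ b := by
    rintro z hz
    constructor <;> rintro rfl <;> exact hne (hP.eq_of_mem hsP hmem hz (by simp))
  simp only [Function.comp_apply, Finset.image_image, id]
  conv_rhs => rw [← Finset.image_id (s := s)]
  exact Finset.image_congr fun z hz => unsqueeze_squeeze hab (avoid z hz).1 (avoid z hz).2

lemma card_filter_mem_insertArc_of_ne (hab : a < b) {z : ℕ} (hza : z ≠ a) (hzb : z ≠ b) :
    ((insertArc a b P).filter (z ∈ ·)).card = (P.filter (squeeze a b z ∈ ·)).card := by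
  rw [insertArc, Finset.filter_insert, if_neg (by simp [hza, hzb]), Finset.filter_image,
    Finset.card_image_of_injective _ image_unsqueeze_injective]
  congr 1
  exact Finset.filter_congr fun s _ => mem_image_unsqueeze_iff hab hza hzb

lemma card_filter_mem_insertArc_of_eq (hab : a < b) {z : ℕ} (hz : z = a ∨ z = b) :
    ((insertArc a b P).filter (z ∈ ·)).card = 1 := by
  rw [insertArc, Finset.filter_insert, if_pos (by rcases hz with rfl | rfl <;> simp),
    Finset.filter_image, Finset.filter_false_of_mem fun s _ => not_mem_image_unsqueeze hab hz]
  simp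

lemma isMatching_insertArc_iff (hab : a < b) (hbN : b < N + 2) :
    IsMatching (N + 2) (insertArc a b P) ↔ IsMatching N P := by
  have blocks : (∀ s ∈ insertArc a b P, (s ⊆ range (N + 2) ∧ s.Nonempty) ∧ s.card = 2) ↔
      ∀ s ∈ P, (s ⊆ range N ∧ s.Nonempty) ∧ s.card = 2 := by
    have arc : ({a, b} ⊆ range (N + 2) ∧ ({a, b} : Finset ℕ).Nonempty) ∧
        ({a, b} : Finset ℕ).card = 2 := by
      refine ⟨⟨fun z hz => ?_, by simp⟩, Finset.card_pair hab.ne⟩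
      simp only [Finset.mem_insert, Finset.mem_singleton] at hz
      rw [Finset.mem_range]
      omega
    simp only [insertArc, Finset.forall_mem_insert, Finset.forall_mem_image, and_iff_right arc]
    refine forall_congr' fun s => imp_congr_right fun _ => ?_
    rw [Finset.card_image_of_injective _ unsqueeze_strictMono.injective, Finset.image_nonempty]
    simp only [Finset.subset_iff, Finset.forall_mem_image, Finset.mem_range,
      unsqueeze_lt_add_two_iff hab hbN]
  have counts : (∀ z ∈ range (N + 2), ((insertArc a b P).filter (z ∈ ·)).card = 1) ↔
      ∀ z ∈ range N, (P.filter (z ∈ ·)).card = 1 := by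
    simp only [Finset.mem_range]
    constructor
    · intro h z hz
      have := h _ ((unsqueeze_lt_add_two_iff hab hbN).2 hz)
      rwa [card_filter_mem_insertArc_of_ne hab (unsqueeze_ne_left z) (unsqueeze_ne_right hab z),
        squeeze_unsqueeze] at this
    · intro h z hz
      by_cases hzab : z = a ∨ z = b
      · exact card_filter_mem_insertArc_of_eq hab hzab
      · push Not at hzab
        rw [card_filter_mem_insertArc_of_ne hab hzab.1 hzab.2]
        refine h _ ((unsqueeze_lt_add_two_iff hab hbN).1 ?_)
        rwa [unsqueeze_squeeze hab hzab.1 hzab.2]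
  rw [isMatching_iff, isMatching_iff, blocks, counts]

end ArcInsertion

section ArcCrossings

variable {a b N M : ℕ} {P Q : Finset (Finset ℕ)} {R : ℕ → ℕ → Prop}

lemma avoids_insertArc_iff (hab : a < b) :
    Avoids R (insertArc a b P) ↔
      (¬ R a b ∧ ¬ R b a) ∧ Avoids (fun z u => R (unsqueeze a b z) (unsqueeze a b u)) P := by
  simp only [Avoids, insertArc]
  rw [Finset.forall_mem_insert, Finset.forall_mem_image]
  simp only [Finset.forall_mem_image, unsqueeze_strictMono.injective.ne_iff]
  apply and_congr_left'
  simp only [Finset.mem_insert, Finset.mem_singleton]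
  constructor
  · exact fun h => ⟨h a (Or.inl rfl) b (Or.inr rfl) hab.ne, h b (Or.inr rfl) a (Or.inl rfl) hab.ne'⟩
  · rintro ⟨h1, h2⟩ i (rfl | rfl) k (rfl | rfl) hik <;> first | exact absurd rfl hik | assumption

lemma pair_unsqueeze_mem_insertArc_iff (hab : a < b) {x y : ℕ} :
    {unsqueeze a b x, unsqueeze a b y} ∈ insertArc a b P ↔ {x, y} ∈ P := by
  have himage : ({unsqueeze a b x, unsqueeze a b y} : Finset ℕ) = ({x, y} : Finset ℕ).image
      (unsqueeze a b) := by simp [Finset.image_insert]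
  have hne : ({unsqueeze a b x, unsqueeze a b y} : Finset ℕ) ≠ {a, b} := fun h =>
    not_mem_image_unsqueeze hab (s := {x, y}) (Or.inl rfl) (by rw [← himage, h]; simp)
  rw [insertArc, Finset.mem_insert, or_iff_right hne, himage,
    image_unsqueeze_injective.mem_finset_image]

lemma crosses_insertArc_iff (hab : a < b) (x : (ℕ × ℕ) × ℕ × ℕ) :
    Crosses (insertArc a b P) ((unsqueeze a b x.1.1, unsqueeze a b x.1.2),
      (unsqueeze a b x.2.1, unsqueeze a b x.2.2)) ↔ Crosses P x := by
  simp only [Crosses, pair_unsqueeze_mem_insertArc_iff hab, unsqueeze_strictMono.lt_iff_lt]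

def crossingWith (a b t u : ℕ) : (ℕ × ℕ) × ℕ × ℕ :=
  if u < a then ((u, t), (a, b)) else ((a, b), (t, u))

namespace IsMatching

lemma ne_of_pair_mem_of_ne (hQ : IsMatching M Q) (hmem : {a, b} ∈ Q) (hab : a < b) {x y : ℕ}
    (h : {x, y} ∈ Q) (hxy : x < y) (hxa : x ≠ a) : x ≠ b ∧ y ≠ a ∧ y ≠ b := by
  by_contra hcon
  have := hQ.pair_eq_of_mem h hmem (by omega)
  omega

/-- A crossing through the arc `{a, b}` is determined by the end `t ∈ (a, b)` of the other arc
and its partner `u`. -/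
lemma exists_eq_crossingWith (hQ : IsMatching M Q) (hmem : {a, b} ∈ Q)
    {x : (ℕ × ℕ) × ℕ × ℕ} (hx : Crosses Q x) (hxa : x.1.1 = a ∨ x.2.1 = a) :
    ∃ t u, a < t ∧ t < b ∧ {t, u} ∈ Q ∧ x = crossingWith a b t u := by
  obtain ⟨⟨x1, x2⟩, x3, x4⟩ := x
  obtain ⟨h1, h2, c1, c2, c3⟩ := hx
  dsimp only at *
  rcases hxa with rfl | rfl
  · obtain rfl := hQ.1.eq_of_pair_mem h1 hmem
    exact ⟨x3, x4, c1, c2, h2, by simp [crossingWith, show ¬ x4 < x1 by omega]⟩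
  · obtain rfl := hQ.1.eq_of_pair_mem h2 hmem
    exact ⟨x2, x1, c2, c3, Finset.pair_comm x1 x2 ▸ h1, by simp [crossingWith, c1]⟩

lemma card_crossings_through (hQ : IsMatching M Q) (hmem : {a, b} ∈ Q)
    (hspan : ∀ z u, {z, u} ∈ Q → a < z → z < b → u < a ∨ b < u) :
    ((crossings M Q).filter (fun x => x.1.1 = a ∨ x.2.1 = a)).card = b - a - 1 := by
  have end_crossingWith : ∀ t u, a < t →
      (if (crossingWith a b t u).1.1 = a then (crossingWith a b t u).2.1
        else (crossingWith a b t u).1.2) = t := by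
    intro t u hat
    unfold crossingWith
    split_ifs <;> simp_all
  rw [← Nat.card_Ioo]
  refine Finset.card_bij (fun x _ => if x.1.1 = a then x.2.1 else x.1.2) ?_ ?_ ?_
  · intro x hx
    obtain ⟨hx, hxa⟩ := Finset.mem_filter.1 hx
    obtain ⟨t, u, hat, htb, -, rfl⟩ :=
      hQ.exists_eq_crossingWith hmem (hQ.mem_crossings_iff.1 hx) hxa
    rw [end_crossingWith t u hat]
    exact Finset.mem_Ioo.2 ⟨hat, htb⟩
  · intro x hx y hy hxy
    obtain ⟨hx, hxa⟩ := Finset.mem_filter.1 hx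
    obtain ⟨hy, hya⟩ := Finset.mem_filter.1 hy
    obtain ⟨t, u, hat, -, htu, rfl⟩ :=
      hQ.exists_eq_crossingWith hmem (hQ.mem_crossings_iff.1 hx) hxa
    obtain ⟨t', u', hat', -, htu', rfl⟩ :=
      hQ.exists_eq_crossingWith hmem (hQ.mem_crossings_iff.1 hy) hya
    simp only [end_crossingWith _ _ hat, end_crossingWith _ _ hat'] at hxy
    subst hxy
    rw [hQ.1.eq_of_pair_mem htu htu']
  · intro t ht
    obtain ⟨hat, htb⟩ := Finset.mem_Ioo.1 ht
    have htM : t < M := by have := hQ.1.lt_of_pair_mem (Finset.pair_comm a b ▸ hmem); omega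
    obtain ⟨u, hu⟩ := hQ.exists_pair_mem htM
    refine ⟨crossingWith a b t u, Finset.mem_filter.2 ⟨hQ.mem_crossings_iff.2 ?_, ?_⟩,
      end_crossingWith t u hat⟩
    all_goals
      unfold crossingWith
      rcases hspan t u hu hat htb with hua | hbu
    · rw [if_pos hua]; exact ⟨Finset.pair_comm t u ▸ hu, hmem, hua, hat, htb⟩
    · rw [if_neg (by omega)]; exact ⟨hmem, hu, hat, htb, hbu⟩
    · rw [if_pos hua]; exact Or.inr rfl
    · rw [if_neg (by omega)]; exact Or.inl rfl

lemma unsqueeze_squeeze_of_crosses (hQ : IsMatching M Q) (hmem : {a, b} ∈ Q) (hab : a < b)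
    {x : (ℕ × ℕ) × ℕ × ℕ} (hx : Crosses Q x) (hxa : ¬ (x.1.1 = a ∨ x.2.1 = a)) :
    ((unsqueeze a b (squeeze a b x.1.1), unsqueeze a b (squeeze a b x.1.2)),
      (unsqueeze a b (squeeze a b x.2.1), unsqueeze a b (squeeze a b x.2.2))) = x := by
  obtain ⟨h1, h2, c1, c2, c3⟩ := hx
  push Not at hxa
  obtain ⟨h11, h12, h13⟩ := hQ.ne_of_pair_mem_of_ne hmem hab h1 (by omega) hxa.1
  obtain ⟨h21, h22, h23⟩ := hQ.ne_of_pair_mem_of_ne hmem hab h2 (by omega) hxa.2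
  simp only [unsqueeze_squeeze hab, *, Ne, not_false_eq_true]

lemma card_crossings_not_through (hP : IsMatching N P) (hab : a < b) (hbN : b < N + 2) :
    ((crossings (N + 2) (insertArc a b P)).filter (fun x => ¬ (x.1.1 = a ∨ x.2.1 = a))).card =
      (crossings N P).card := by
  have hQ : IsMatching (N + 2) (insertArc a b P) := (isMatching_insertArc_iff hab hbN).2 hP
  have hmem : {a, b} ∈ insertArc a b P := Finset.mem_insert_self _ _
  refine Finset.card_nbij'
    (fun x => ((squeeze a b x.1.1, squeeze a b x.1.2), (squeeze a b x.2.1, squeeze a b x.2.2)))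
    (fun x => ((unsqueeze a b x.1.1, unsqueeze a b x.1.2),
      (unsqueeze a b x.2.1, unsqueeze a b x.2.2))) ?_ ?_ ?_ ?_
  all_goals intro x hx
  all_goals simp only [Finset.mem_coe, Finset.mem_filter, hP.mem_crossings_iff,
    hQ.mem_crossings_iff] at hx ⊢
  · rw [← crosses_insertArc_iff hab, hQ.unsqueeze_squeeze_of_crosses hmem hab hx.1 hx.2]
    exact hx.1
  · exact ⟨(crosses_insertArc_iff hab x).2 hx, by simp [unsqueeze_ne_left]⟩
  · exact hQ.unsqueeze_squeeze_of_crosses hmem hab hx.1 hx.2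
  · simp [squeeze_unsqueeze]

end IsMatching

end ArcCrossings

section ArcContraction

variable {a b N M : ℕ} {P Q : Finset (Finset ℕ)} {R : ℕ → ℕ → Prop}

/-- The new arc `{a, b}` crosses exactly the arcs through the `b - a - 1` points between `a` and
`b`. -/
lemma crossNum_insertArc (hP : IsMatching N P) (hab : a < b) (hbN : b < N + 2)
    (hspan : ∀ z u, {z, u} ∈ insertArc a b P → a < z → z < b → u < a ∨ b < u) :
    crossNum (N + 2) (insertArc a b P) = crossNum N P + (b - a - 1) := by
  have hQ := (isMatching_insertArc_iff hab hbN).2 hP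
  rw [hQ.crossNum_eq_card, hP.crossNum_eq_card,
    ← Finset.card_filter_add_card_filter_not (fun x => x.1.1 = a ∨ x.2.1 = a),
    hQ.card_crossings_through (Finset.mem_insert_self _ _) hspan,
    hP.card_crossings_not_through hab hbN, add_comm]

lemma IsMatching.lt_or_lt_of_pair_mem (hQ : IsMatching M Q) (hA : Avoids R Q)
    (hmem : {a, b} ∈ Q) (hinner : ∀ z ∈ Ioo a b, ∀ u ∈ Ioo a b, z ≠ u → R z u) {z u : ℕ}
    (hzu : {z, u} ∈ Q) (haz : a < z) (hzb : z < b) : u < a ∨ b < u := by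
  by_contra h
  have hua : u ≠ a := fun hua => by
    have := hQ.pair_eq_of_mem hzu hmem (Or.inr (Or.inr (Or.inl hua))); omega
  have hub : u ≠ b := fun hub => by
    have := hQ.pair_eq_of_mem hzu hmem (Or.inr (Or.inr (Or.inr hub))); omega
  exact hQ.avoids_iff.1 hA z u hzu <| hinner z (Finset.mem_Ioo.2 ⟨haz, hzb⟩) u
    (Finset.mem_Ioo.2 ⟨by omega, by omega⟩) (hQ.ne_of_pair_mem hzu)

/-- Since no two points strictly between `a` and `b` may be matched together, all of them are
matched outside `[a, b]`, so the arc `{a, b}` always has `b - a - 1` crossings. -/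
theorem sum_filter_pair_mem_matchingsAvoiding (hab : a < b) (hbN : b < N + 2)
    (hR : ¬ R a b ∧ ¬ R b a) (hinner : ∀ z ∈ Ioo a b, ∀ u ∈ Ioo a b, z ≠ u → R z u) (q : ℝ) :
    ∑ Q ∈ (matchingsAvoiding (N + 2) R).filter ({a, b} ∈ ·), q ^ crossNum (N + 2) Q =
      q ^ (b - a - 1) * crossPoly N (fun z u => R (unsqueeze a b z) (unsqueeze a b u)) q := by
  have himage : (matchingsAvoiding (N + 2) R).filter ({a, b} ∈ ·) =
      (matchingsAvoiding N fun z u => R (unsqueeze a b z) (unsqueeze a b u)).image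
        (insertArc a b) := by
    ext Q
    simp only [Finset.mem_filter, Finset.mem_image, mem_matchingsAvoiding]
    constructor
    · rintro ⟨⟨hQ, hA⟩, hmem⟩
      have hQ' := insertArc_contractArc hQ.1 hab hmem
      refine ⟨contractArc a b Q, ?_, hQ'⟩
      rw [← hQ'] at hQ hA
      exact ⟨(isMatching_insertArc_iff hab hbN).1 hQ, ((avoids_insertArc_iff hab).1 hA).2⟩
    · rintro ⟨P, ⟨hP, hA⟩, rfl⟩
      exact ⟨⟨(isMatching_insertArc_iff hab hbN).2 hP, (avoids_insertArc_iff hab).2 ⟨hR, hA⟩⟩,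
        Finset.mem_insert_self _ _⟩
  rw [himage, Finset.sum_image fun P _ P' _ h => by
      rw [← contractArc_insertArc hab P, h, contractArc_insertArc hab],
    crossPoly, Finset.mul_sum]
  refine Finset.sum_congr rfl fun P hP => ?_
  obtain ⟨hP, hA⟩ := mem_matchingsAvoiding.1 hP
  have hQ := (isMatching_insertArc_iff hab hbN).2 hP
  rw [crossNum_insertArc hP hab hbN fun z u => hQ.lt_or_lt_of_pair_mem
      ((avoids_insertArc_iff hab).2 ⟨hR, hA⟩) (Finset.mem_insert_self _ _) hinner,
    pow_add, mul_comm]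

end ArcContraction

section PointInsertion

variable {n : Fin m → ℕ} {j : Fin m} {c : ℕ}

lemma total_update_add_one : total (Function.update n j (n j + 1)) = total n + 1 := by
  have := total_update (n := n) (j := j) (n j + 1); omega

lemma filter_forall_pair_not_mem_eq_matchings (hc : c ∈ Icc (psum n j) (psum n j + n j)) :
    (matchingsAvoiding (total n + 1) (sameBoxOmitting n c)).filter
        (fun P => ∀ x ∈ (Icc (psum n j) (psum n j + n j)).erase c, {x, c} ∉ P) =
      matchings (Function.update n j (n j + 1)) := by
  rw [matchings_eq_matchingsAvoiding, total_update_add_one]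
  ext P
  simp only [Finset.mem_filter, mem_matchingsAvoiding]
  constructor
  · rintro ⟨⟨hP, hA⟩, hfree⟩
    refine ⟨hP, hP.avoids_iff.2 fun x y hxy h => ?_⟩
    rcases (sameBox_update_add_one_iff hc x y).1 h with h | ⟨hx, hy⟩
    · exact hP.avoids_iff.1 hA x y hxy h
    by_cases hxc : x = c
    · subst hxc
      exact hfree y (Finset.mem_erase.2 ⟨(hP.ne_of_pair_mem hxy).symm, hy⟩)
        (Finset.pair_comm x y ▸ hxy)
    by_cases hyc : y = c
    · subst hyc
      exact hfree x (Finset.mem_erase.2 ⟨hxc, hx⟩) hxy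
    exact hP.avoids_iff.1 hA x y hxy (sameBoxOmitting_of_mem_Icc hc hx hy hxc hyc)
  · rintro ⟨hP, hA⟩
    refine ⟨⟨hP, hP.avoids_iff.2 fun x y hxy h => hP.avoids_iff.1 hA x y hxy
      ((sameBox_update_add_one_iff hc x y).2 (Or.inl h))⟩, fun x hx hxc => ?_⟩
    exact hP.avoids_iff.1 hA x c hxc
      ((sameBox_update_add_one_iff hc x c).2 (Or.inr ⟨(Finset.mem_erase.1 hx).2, hc⟩))

/-- Removing `c` and a point `x ≠ c` of the enlarged box `j` is removing one point of box `j`. -/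
lemma sameBoxOmitting_unsqueeze_iff (hc : c ∈ Icc (psum n j) (psum n j + n j)) {x : ℕ}
    (hx : x ∈ (Icc (psum n j) (psum n j + n j)).erase c) (z u : ℕ) :
    sameBoxOmitting n c (unsqueeze (min x c) (max x c) z) (unsqueeze (min x c) (max x c) u) ↔
      sameBox (Function.update n j (n j - 1)) z u := by
  obtain ⟨hxc, hxI⟩ := Finset.mem_erase.1 hx
  have key : ∀ z, unsqueeze (min x c) (max x c) z ≠ c ∧
      collapse c (unsqueeze (min x c) (max x c) z) = uncollapse (collapse c x) z := by
    intro z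
    unfold unsqueeze collapse uncollapse
    split_ifs <;> omega
  rw [sameBox_update_sub_one_iff ((inBox_collapse_iff hc hxc).2 hxI), sameBoxOmitting,
    (key z).2, (key u).2]
  simp only [(key z).1, (key u).1, Ne, not_false_eq_true, true_and]

lemma sum_filter_pair_mem_matchingsAvoiding_sameBoxOmitting
    (hc : c ∈ Icc (psum n j) (psum n j + n j)) {x : ℕ}
    (hx : x ∈ (Icc (psum n j) (psum n j + n j)).erase c) (q : ℝ) :
    ∑ P ∈ (matchingsAvoiding (total n + 1) (sameBoxOmitting n c)).filter ({x, c} ∈ ·),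
        q ^ crossNum (total n + 1) P =
      q ^ (max x c - min x c - 1) * Kq (Function.update n j (n j - 1)) q := by
  obtain ⟨hxc, hxI⟩ := Finset.mem_erase.1 hx
  have hbox := Finset.mem_Icc.1 hc
  have hxbox := Finset.mem_Icc.1 hxI
  have htot : total n + 1 = total (Function.update n j (n j - 1)) + 2 := by
    have := total_update (n := n) (j := j) (n j - 1); omega
  have hpair : ({x, c} : Finset ℕ) = {min x c, max x c} := by
    rcases le_total x c with h | h
    · rw [min_eq_left h, max_eq_right h]
    · rw [min_eq_right h, max_eq_left h, Finset.pair_comm]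
  rw [hpair, htot, sum_filter_pair_mem_matchingsAvoiding (by omega)
      (by have := psum_add_self_le_total n j; omega) ?_ ?_ q, Kq_eq_crossPoly]
  · congr 2
    funext z u
    exact propext (sameBoxOmitting_unsqueeze_iff hc hx z u)
  · exact ⟨fun h => by unfold sameBoxOmitting at h; omega,
      fun h => by unfold sameBoxOmitting at h; omega⟩
  · intro z hz u hu hzu
    simp only [Finset.mem_Ioo] at hz hu
    exact sameBoxOmitting_of_mem_Icc hc (Finset.mem_Icc.2 (by omega)) (Finset.mem_Icc.2 (by omega))
      (by omega) (by omega)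

/-- Sorting the matchings of `[N + 1]` by the partner of the extra point `c`. -/
theorem crossPoly_sameBoxOmitting (hc : c ∈ Icc (psum n j) (psum n j + n j)) (q : ℝ) :
    crossPoly (total n + 1) (sameBoxOmitting n c) q =
      Kq (Function.update n j (n j + 1)) q +
        (∑ x ∈ (Icc (psum n j) (psum n j + n j)).erase c, q ^ (max x c - min x c - 1)) *
          Kq (Function.update n j (n j - 1)) q := by
  set S := matchingsAvoiding (total n + 1) (sameBoxOmitting n c)
  set X := (Icc (psum n j) (psum n j + n j)).erase c
  have hsplit : S.filter (fun P => ¬ ∀ x ∈ X, {x, c} ∉ P) =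
      X.biUnion fun x => S.filter ({x, c} ∈ ·) := by
    ext P
    simp only [Finset.mem_filter, Finset.mem_biUnion, not_forall, not_not, exists_prop]
    exact ⟨fun ⟨hP, x, hx, h⟩ => ⟨x, hx, hP, h⟩, fun ⟨x, hx, hP, h⟩ => ⟨hP, x, hx, h⟩⟩
  have hdisj : (X : Set ℕ).PairwiseDisjoint fun x => S.filter ({x, c} ∈ ·) := by
    intro x _ y _ hxy
    refine Finset.disjoint_left.2 fun P hx hy => hxy ?_
    obtain ⟨hP, hx⟩ := Finset.mem_filter.1 hx
    obtain ⟨-, hy⟩ := Finset.mem_filter.1 hy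
    exact (mem_matchingsAvoiding.1 hP).1.1.eq_of_pair_mem (Finset.pair_comm x c ▸ hx)
      (Finset.pair_comm y c ▸ hy)
  rw [crossPoly, ← Finset.sum_filter_add_sum_filter_not S (fun P => ∀ x ∈ X, {x, c} ∉ P),
    filter_forall_pair_not_mem_eq_matchings hc, hsplit, Finset.sum_biUnion hdisj, Finset.sum_mul,
    Kq, total_update_add_one]
  exact congrArg _ (Finset.sum_congr rfl fun x hx =>
    sum_filter_pair_mem_matchingsAvoiding_sameBoxOmitting hc hx q)

lemma sum_Icc_erase_left_pow (q : ℝ) (p k : ℕ) :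
    ∑ x ∈ (Icc p (p + k)).erase p, q ^ (max x p - min x p - 1) = qInt q k := by
  rw [Finset.Icc_erase_left, ← Finset.Ico_add_one_add_one_eq_Ioc, Finset.sum_Ico_eq_sum_range,
    qInt]
  refine Finset.sum_congr (by congr 1; omega) fun t _ => ?_
  congr 1
  omega

lemma sum_Icc_erase_right_pow (q : ℝ) (p k : ℕ) :
    ∑ x ∈ (Icc p (p + k)).erase (p + k), q ^ (max x (p + k) - min x (p + k) - 1) = qInt q k := by
  rw [Finset.Icc_erase_right, Finset.sum_Ico_eq_sum_range, qInt,
    ← Finset.sum_range_reflect (fun t => q ^ t)]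
  refine Finset.sum_congr (by congr 1; omega) fun t ht => ?_
  rw [Finset.mem_range] at ht
  congr 1
  omega

lemma crossPoly_sameBoxOmitting_of_endpoint (hc : c = psum n j ∨ c = psum n j + n j) (q : ℝ) :
    crossPoly (total n + 1) (sameBoxOmitting n c) q =
      Kq (Function.update n j (n j + 1)) q +
        qInt q (n j) * Kq (Function.update n j (n j - 1)) q := by
  rcases hc with rfl | rfl
  · rw [crossPoly_sameBoxOmitting (j := j) (by simp), sum_Icc_erase_left_pow]
  · rw [crossPoly_sameBoxOmitting (j := j) (by simp), sum_Icc_erase_right_pow]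

end PointInsertion

/-- The point between two consecutive boxes ends the first and starts the second. -/
lemma Kq_castSucc_add_qInt_mul_eq_succ (n : Fin (m + 1) → ℕ) (i : Fin m) (q : ℝ) :
    Kq (Function.update n i.castSucc (n i.castSucc + 1)) q +
        qInt q (n i.castSucc) * Kq (Function.update n i.castSucc (n i.castSucc - 1)) q =
      Kq (Function.update n i.succ (n i.succ + 1)) q +
        qInt q (n i.succ) * Kq (Function.update n i.succ (n i.succ - 1)) q := by
  rw [← crossPoly_sameBoxOmitting_of_endpoint (Or.inr (psum_succ n i)),
    ← crossPoly_sameBoxOmitting_of_endpoint (Or.inl rfl)]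

theorem q_hermite_difference_system_general {m : ℕ} (n : Fin m → ℕ) (j k : Fin m)
    (q : ℝ) :
    Kq (Function.update n j (n j + 1)) q - Kq (Function.update n k (n k + 1)) q
      = qInt q (n k) * Kq (Function.update n k (n k - 1)) q
        - qInt q (n j) * Kq (Function.update n j (n j - 1)) q := by
  obtain ⟨m, rfl⟩ : ∃ m', m = m' + 1 := ⟨m - 1, by have := j.pos; omega⟩
  set F : Fin (m + 1) → ℝ := fun i =>
    Kq (Function.update n i (n i + 1)) q + qInt q (n i) * Kq (Function.update n i (n i - 1)) q
  have hF : ∀ i, F i = F 0 := by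
    intro i
    induction i using Fin.induction with
    | zero => rfl
    | succ i ih => rw [← ih]; exact (Kq_castSucc_add_qInt_mul_eq_succ n i q).symm
  have := (hF j).trans (hF k).symm
  simp only [F] at this
  linarith

/-- the difference system satisfied by the crossing-enumerating
polynomials of inhomogeneous perfect matchings. -/
theorem q_hermite_difference_system {m : ℕ} (n : Fin m → ℕ) (j k : Fin m)
    (hjk : j ≠ k) (q : ℝ) :
    Kq (Function.update n j (n j + 1)) q - Kq (Function.update n k (n k + 1)) q
      = qInt q (n k) * Kq (Function.update n k (n k - 1)) q
        - qInt q (n j) * Kq (Function.update n j (n j - 1)) q :=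
  q_hermite_difference_system_general n j k q

end Paper
end

section
/- Let n = (n_1,…,n_m) be a tuple of nonnegative integers with N = n_1+⋯+n_m. The number of inhomogeneous perfect matchings of [N] (with respect to the boxes determined by n) having no crossing equals (2/π) ∫_{-1}^{1} U_{n_1}(x)⋯U_{n_m}(x) √(1−x²) dx, where U_n denotes the Chebyshev polynomial of the second kind (U_0 = 1, U_1(x) = 2x, U_{n+1}(x) = 2x·U_n(x) − U_{n-1}(x)). -/
/-!
Read `[N]` from left to right and mark the smaller element of each block of a perfect matching as an
opener (`true`) and the larger one as a closer (`false`). For noncrossing matchings this is a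
bijection onto Dyck words: the closer matched with an opener is the first return of the walk to the
level it had before the opener. The matching is inhomogeneous exactly when, inside every box, all
closers come before all openers, so it is determined by the numbers `a j` of closers in the boxes,
and the Dyck condition becomes a system of linear inequalities on these numbers, one for the lowest
point of the walk in each box.

Counting these vectors box by box, with `h` the number of arcs still open, gives the recursion
`C(h; c, n') = ∑_{k ≤ min c h} C(c + h - 2k; n')`. The integral `(2/π) ∫ U_h ∏ U_{n_j} √(1 - x²)`
satisfies the same recursion by the linearization `U_c U_h = ∑_{k ≤ min c h} U_{c + h - 2k}` and the
orthogonality relation `∫ U_h √(1 - x²) = (π/2) [h = 0]`.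
-/

open Finset MeasureTheory
open scoped Classical

namespace Paper

/-- Chebyshev polynomials of the second kind: `U 0 = 1`, `U 1 x = 2x`,
`U (n+2) x = 2x·U (n+1) x - U n x`. -/
noncomputable def chebU : ℕ → ℝ → ℝ
  | 0, _ => 1
  | 1, x => 2 * x
  | (n + 2), x => 2 * x * chebU (n + 1) x - chebU n x


section Words

variable {w w' : ℕ → Bool} {N p p' q q' r : ℕ}

def level (w : ℕ → Bool) (r : ℕ) : ℤ := ∑ t ∈ range r, if w t then 1 else -1

theorem level_zero (w : ℕ → Bool) : level w 0 = 0 := rfl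

theorem level_succ (w : ℕ → Bool) (r : ℕ) :
    level w (r + 1) = level w r + if w r then 1 else -1 :=
  sum_range_succ _ r

theorem level_succ_of_true (h : w r = true) : level w (r + 1) = level w r + 1 := by
  simp [level_succ, h]

theorem level_succ_of_false (h : w r = false) : level w (r + 1) = level w r - 1 := by
  simp [level_succ, h, sub_eq_add_neg]

theorem level_sub_level (w : ℕ → Bool) (h : r ≤ q) :
    level w q - level w r = ∑ t ∈ Ico r q, if w t then 1 else -1 :=
  (sum_Ico_eq_sub _ h).symm

theorem sum_sign_eq_card_sub_card (w : ℕ → Bool) (s : Finset ℕ) :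
    ∑ t ∈ s, (if w t then (1 : ℤ) else -1) = #{t ∈ s | w t} - #{t ∈ s | w t = false} := by
  simp [sum_ite, sub_eq_add_neg]

theorem level_eq (w : ℕ → Bool) (r : ℕ) :
    level w r = r - 2 * #{t ∈ range r | w t = false} := by
  have := card_filter_add_card_filter_not (s := range r) (fun t => w t = true)
  simp only [Bool.not_eq_true, card_range] at this
  rw [level, sum_sign_eq_card_sub_card]
  omega

theorem level_congr (h : ∀ t < r, w t = w' t) : level w r = level w' r :=
  sum_congr rfl fun t ht => by rw [h t (mem_range.1 ht)]

structure IsDyck (w : ℕ → Bool) (N : ℕ) : Prop where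
  nonneg : ∀ r ≤ N, 0 ≤ level w r
  level_eq_zero : level w N = 0

/-- The closer at `q` is matched with the opener at `p`: right after `q` the walk is back, for the
first time, at the level it had before `p`. -/
structure IsFirstReturn (w : ℕ → Bool) (p q : ℕ) : Prop where
  lt : p < q
  level_succ_eq : level w (q + 1) = level w p
  level_lt : ∀ r, p < r → r ≤ q → level w p < level w r

namespace IsFirstReturn

theorem opener (h : IsFirstReturn w p q) : w p = true := by
  have := h.level_lt (p + 1) (by omega) h.lt
  by_contra hp
  rw [level_succ_of_false (by simpa using hp)] at this
  omega

theorem closer (h : IsFirstReturn w p q) : w q = false := by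
  have hret := h.level_succ_eq
  have := h.level_lt q h.lt le_rfl
  by_contra hq
  rw [level_succ_of_true (by simpa using hq)] at hret
  omega

theorem right_unique (h : IsFirstReturn w p q) (h' : IsFirstReturn w p q') : q = q' := by
  obtain ⟨hpq, hret, hmin⟩ := h
  obtain ⟨hpq', hret', hmin'⟩ := h'
  rcases lt_trichotomy q q' with hlt | heq | hgt
  · have := hmin' (q + 1) (by omega) hlt
    omega
  · exact heq
  · have := hmin (q' + 1) (by omega) hgt
    omega

theorem left_unique (h : IsFirstReturn w p q) (h' : IsFirstReturn w p' q) : p = p' := by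
  obtain ⟨hpq, hret, hmin⟩ := h
  obtain ⟨hpq', hret', hmin'⟩ := h'
  rcases lt_trichotomy p p' with hlt | heq | hgt
  · have := hmin p' hlt hpq'.le
    omega
  · exact heq
  · have := hmin' p hgt hpq.le
    omega

theorem lt_of_nested (h : IsFirstReturn w p q) (h' : IsFirstReturn w p' q')
    (hpp' : p < p') (hp'q : p' < q) : q' < q := by
  have := h.level_lt p' hpp' hp'q.le
  rcases lt_trichotomy q' q with hlt | rfl | hgt
  · exact hlt
  · exact absurd (h.left_unique h') hpp'.ne
  · have := h'.level_lt (q + 1) (by omega) hgt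
    have := h.level_succ_eq
    omega

theorem congr (h : IsFirstReturn w p q) (hww' : ∀ t ≤ q, w t = w' t) :
    IsFirstReturn w' p q := by
  have := h.lt
  have hlevel : ∀ r ≤ q + 1, level w' r = level w r := fun r hr =>
    level_congr fun t ht => (hww' t (by omega)).symm
  refine ⟨h.lt, ?_, fun r hpr hrq => ?_⟩
  · rw [hlevel _ le_rfl, hlevel p (by omega)]
    exact h.level_succ_eq
  · rw [hlevel r (by omega), hlevel p (by omega)]
    exact h.level_lt r hpr hrq

end IsFirstReturn

namespace IsDyck

theorem exists_isFirstReturn (hw : IsDyck w N) (hp : p < N) (hwp : w p = true) :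
    ∃ q < N, IsFirstReturn w p q := by
  have hup := level_succ_of_true hwp
  have hlast : p < N - 1 ∧ level w (N - 1 + 1) ≤ level w p := by
    have h₀ := hw.level_eq_zero
    have := hw.nonneg p hp.le
    rcases eq_or_ne (p + 1) N with h | h
    · rw [← h, hup] at h₀
      omega
    · rw [Nat.sub_add_cancel (by omega), h₀]
      omega
  have hex : ∃ q, p < q ∧ level w (q + 1) ≤ level w p := ⟨N - 1, hlast⟩
  set q := Nat.find hex
  obtain ⟨hpq, hq⟩ : p < q ∧ level w (q + 1) ≤ level w p := Nat.find_spec hex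
  have hqN : q ≤ N - 1 := Nat.find_min' hex hlast
  have hmin : ∀ r, p < r → r ≤ q → level w p < level w r := by
    intro r hpr hrq
    rcases Nat.lt_or_ge (p + 1) r with h | h
    · have := Nat.find_min hex (m := r - 1) (by omega)
      rw [Nat.sub_add_cancel (by omega), not_and, not_le] at this
      exact this (by omega)
    · rw [show r = p + 1 by omega, hup]
      omega
  refine ⟨q, by omega, hpq, ?_, hmin⟩
  have := hmin q hpq le_rfl
  rw [level_succ] at hq ⊢
  split_ifs at hq ⊢ <;> omega

theorem exists_isFirstReturn_of_closer (hw : IsDyck w N) (hq : q < N) (hwq : w q = false) :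
    ∃ p, IsFirstReturn w p q := by
  have hdown := level_succ_of_false hwq
  set P : ℕ → Prop := fun k => level w k ≤ level w (q + 1)
  set p := Nat.findGreatest P q
  have hP0 : P 0 := by simpa [P, level_zero] using hw.nonneg (q + 1) hq
  have hPp : P p := Nat.findGreatest_spec (Nat.zero_le q) hP0
  have hpq : p < q := by
    refine lt_of_le_of_ne (Nat.findGreatest_le q) fun h => ?_
    have : P q := h ▸ hPp
    simp only [P] at this
    omega
  have hmin : ∀ r, p < r → r ≤ q → level w (q + 1) < level w r := fun r hpr hrq => by
    simpa [P] using Nat.findGreatest_is_greatest hpr hrq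
  have hstep := hmin (p + 1) (by omega) hpq
  refine ⟨p, hpq, ?_, fun r hpr hrq => lt_of_le_of_lt hPp (hmin r hpr hrq)⟩
  simp only [P] at hPp
  rw [level_succ w p] at hstep
  split_ifs at hstep <;> omega

end IsDyck

end Words

section PerfectMatchings

structure IsPerfectMatching (N : ℕ) (P : Finset (Finset ℕ)) : Prop where
  isPartitionOf : IsPartitionOf N P
  card_eq_two : ∀ b ∈ P, b.card = 2

def IsNoncrossing (P : Finset (Finset ℕ)) : Prop :=
  ∀ i j k l, {i, j} ∈ P → {k, l} ∈ P → ¬ (i < k ∧ k < j ∧ j < l)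

noncomputable def mate (P : Finset (Finset ℕ)) (i : ℕ) : ℕ :=
  sInf {j | j ≠ i ∧ {i, j} ∈ P}

noncomputable def wordOf (P : Finset (Finset ℕ)) (i : ℕ) : Bool :=
  decide (i < mate P i)

variable {N : ℕ} {P : Finset (Finset ℕ)} {b b' : Finset ℕ} {i j t : ℕ}

theorem isArc_iff (hP : ∀ b ∈ P, b.card = 2) : IsArc P i j ↔ i < j ∧ {i, j} ∈ P := by
  constructor
  · rintro ⟨hij, b, hb, hib, hjb, -⟩
    refine ⟨hij, ?_⟩
    convert hb
    refine eq_of_subset_of_card_le (insert_subset hib (singleton_subset_iff.2 hjb)) ?_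
    rw [hP b hb, card_pair hij.ne]
  · rintro ⟨hij, hb⟩
    refine ⟨hij, _, hb, by simp, by simp, fun t ht => ?_⟩
    simp only [mem_insert, mem_singleton] at ht
    omega

namespace IsPerfectMatching

theorem lt_of_mem (hP : IsPerfectMatching N P) (hb : b ∈ P) (hi : i ∈ b) : i < N :=
  mem_range.1 ((hP.isPartitionOf.1 b hb).1 hi)

theorem crossNum_eq_zero_iff (hP : IsPerfectMatching N P) :
    crossNum N P = 0 ↔ IsNoncrossing P := by
  simp only [crossNum, card_eq_zero, filter_eq_empty_iff, isArc_iff hP.card_eq_two, mem_product,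
    mem_range, Prod.forall]
  constructor
  · intro h i j k l hij hkl hcross
    have hj := hP.lt_of_mem hij (by simp : j ∈ ({i, j} : Finset ℕ))
    have hl := hP.lt_of_mem hkl (by simp : l ∈ ({k, l} : Finset ℕ))
    exact h i j k l ⟨⟨by omega, hj⟩, ⟨by omega, hl⟩⟩ ⟨⟨by omega, hij⟩, ⟨by omega, hkl⟩, hcross⟩
  · rintro h i j k l - ⟨⟨-, hij⟩, ⟨-, hkl⟩, hcross⟩
    exact h i j k l hij hkl hcross

theorem eq_of_mem_of_mem (hP : IsPerfectMatching N P) (hb : b ∈ P) (hb' : b' ∈ P) (hi : i ∈ b)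
    (hi' : i ∈ b') : b = b' :=
  card_le_one.1 (hP.isPartitionOf.2 i (mem_range.2 (hP.lt_of_mem hb hi))).le
    b (mem_filter.2 ⟨hb, hi⟩) b' (mem_filter.2 ⟨hb', hi'⟩)

theorem exists_pair_mem (hP : IsPerfectMatching N P) (hi : i < N) : ∃ j ≠ i, {i, j} ∈ P := by
  obtain ⟨b, hb⟩ := card_pos.1 ((hP.isPartitionOf.2 i (mem_range.2 hi)).symm ▸ one_pos)
  rw [mem_filter] at hb
  obtain ⟨x, y, hxy, rfl⟩ := Finset.card_eq_two.1 (hP.card_eq_two _ hb.1)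
  rcases mem_insert.1 hb.2 with rfl | hy
  · exact ⟨y, hxy.symm, hb.1⟩
  · obtain rfl := mem_singleton.1 hy
    exact ⟨x, hxy, pair_comm x i ▸ hb.1⟩

theorem mate_eq (hP : IsPerfectMatching N P) (h : {i, j} ∈ P) (hji : j ≠ i) : mate P i = j := by
  have : {j' | j' ≠ i ∧ {i, j'} ∈ P} = {j} := by
    ext j'
    refine ⟨fun ⟨hj', hmem⟩ => ?_, fun h' => h' ▸ ⟨hji, h⟩⟩
    have := hP.eq_of_mem_of_mem hmem h (mem_insert_self i _) (mem_insert_self i _)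
    have : j' ∈ ({i, j} : Finset ℕ) := this ▸ by simp
    simpa [hj'] using this
  rw [mate, this, csInf_singleton]

theorem mate_ne (hP : IsPerfectMatching N P) (hi : i < N) : mate P i ≠ i := by
  obtain ⟨j, hji, h⟩ := hP.exists_pair_mem hi
  rwa [hP.mate_eq h hji]

theorem pair_mate_mem (hP : IsPerfectMatching N P) (hi : i < N) : {i, mate P i} ∈ P := by
  obtain ⟨j, hji, h⟩ := hP.exists_pair_mem hi
  rwa [hP.mate_eq h hji]

theorem mate_lt (hP : IsPerfectMatching N P) (hi : i < N) : mate P i < N :=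
  hP.lt_of_mem (hP.pair_mate_mem hi) (by simp)

theorem mate_mate (hP : IsPerfectMatching N P) (hi : i < N) : mate P (mate P i) = i :=
  hP.mate_eq (pair_comm i _ ▸ hP.pair_mate_mem hi) (hP.mate_ne hi).symm

theorem exists_eq_pair_mate (hP : IsPerfectMatching N P) (hb : b ∈ P) :
    ∃ p < N, p < mate P p ∧ b = {p, mate P p} := by
  obtain ⟨x, hx⟩ := card_pos.1 (by rw [hP.card_eq_two b hb]; norm_num)
  have hxN := hP.lt_of_mem hb hx
  have hbx := hP.eq_of_mem_of_mem hb (hP.pair_mate_mem hxN) hx (by simp)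
  rcases lt_or_gt_of_ne (hP.mate_ne hxN) with hlt | hgt
  · refine ⟨mate P x, hP.mate_lt hxN, ?_, ?_⟩ <;> rw [hP.mate_mate hxN]
    · exact hlt
    · rw [hbx, pair_comm]
  · exact ⟨x, hxN, hgt, hbx⟩

theorem wordOf_eq_false_iff (hP : IsPerfectMatching N P) (ht : t < N) :
    wordOf P t = false ↔ mate P t < t := by
  have := hP.mate_ne ht
  simp only [wordOf, decide_eq_false_iff_not, not_lt]
  omega

theorem wordOf_mate (hP : IsPerfectMatching N P) (ht : t < N) :
    wordOf P (mate P t) = !wordOf P t := by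
  have := hP.mate_ne ht
  simp only [wordOf, hP.mate_mate ht]
  by_cases h : t < mate P t
  · simp [h, not_lt.2 h.le]
  · simp [h, show mate P t < t by omega]

end IsPerfectMatching

end PerfectMatchings

section MatchingOfWord

noncomputable def matchingOfWord (w : ℕ → Bool) (N : ℕ) : Finset (Finset ℕ) :=
  {pq ∈ range N ×ˢ range N | IsFirstReturn w pq.1 pq.2}.image fun pq => {pq.1, pq.2}

variable {w w' : ℕ → Bool} {N i j : ℕ} {b : Finset ℕ}

theorem mem_matchingOfWord :
    b ∈ matchingOfWord w N ↔ ∃ p q, q < N ∧ IsFirstReturn w p q ∧ b = {p, q} := by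
  simp only [matchingOfWord, mem_image, mem_filter, mem_product, mem_range, Prod.exists]
  constructor
  · rintro ⟨p, q, ⟨⟨-, hq⟩, hpq⟩, rfl⟩
    exact ⟨p, q, hq, hpq, rfl⟩
  · rintro ⟨p, q, hq, hpq, rfl⟩
    exact ⟨p, q, ⟨⟨hpq.lt.trans hq, hq⟩, hpq⟩, rfl⟩

theorem pair_mem_matchingOfWord (hij : i < j) :
    {i, j} ∈ matchingOfWord w N ↔ j < N ∧ IsFirstReturn w i j := by
  rw [mem_matchingOfWord]
  refine ⟨fun ⟨p, q, hq, hpq, h⟩ => ?_, fun ⟨hj, h⟩ => ⟨i, j, hj, h, rfl⟩⟩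
  have hp : p ∈ ({i, j} : Finset ℕ) := h ▸ mem_insert_self p _
  have hq' : q ∈ ({i, j} : Finset ℕ) := h ▸ by simp
  have hi : i ∈ ({p, q} : Finset ℕ) := h ▸ mem_insert_self i _
  have := hpq.lt
  simp only [mem_insert, mem_singleton] at hp hq' hi
  obtain ⟨rfl, rfl⟩ : p = i ∧ q = j := by omega
  exact ⟨hq, hpq⟩

theorem isNoncrossing_matchingOfWord : IsNoncrossing (matchingOfWord w N) := by
  rintro i j k l hij hkl ⟨hik, hkj, hjl⟩
  have h₁ := ((pair_mem_matchingOfWord (by omega)).1 hij).2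
  have h₂ := ((pair_mem_matchingOfWord (by omega)).1 hkl).2
  exact absurd (h₁.lt_of_nested h₂ hik hkj) (by omega)

theorem matchingOfWord_congr (h : ∀ t < N, w t = w' t) :
    matchingOfWord w N = matchingOfWord w' N := by
  ext b
  simp only [mem_matchingOfWord]
  refine exists₂_congr fun p q => and_congr_right fun hq => and_congr_left fun _ =>
    ⟨fun hpq => hpq.congr fun t ht => h t (by omega),
      fun hpq => hpq.congr fun t ht => (h t (by omega)).symm⟩

namespace IsDyck

theorem exists_pair_mem_matchingOfWord (hw : IsDyck w N) (hi : i < N) :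
    ∃ j, {i, j} ∈ matchingOfWord w N ∧ ∀ b ∈ matchingOfWord w N, i ∈ b → b = {i, j} := by
  cases hwi : w i
  · obtain ⟨p, hp⟩ := hw.exists_isFirstReturn_of_closer hi hwi
    refine ⟨p, pair_comm p i ▸ mem_matchingOfWord.2 ⟨p, i, hi, hp, rfl⟩, fun b hb hib => ?_⟩
    obtain ⟨p', q', -, h', rfl⟩ := mem_matchingOfWord.1 hb
    rcases mem_insert.1 hib with rfl | hiq
    · exact absurd h'.opener (by simp [hwi])
    · obtain rfl := mem_singleton.1 hiq
      rw [hp.left_unique h', pair_comm]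
  · obtain ⟨q, hqN, hq⟩ := hw.exists_isFirstReturn hi hwi
    refine ⟨q, mem_matchingOfWord.2 ⟨i, q, hqN, hq, rfl⟩, fun b hb hib => ?_⟩
    obtain ⟨p', q', -, h', rfl⟩ := mem_matchingOfWord.1 hb
    rcases mem_insert.1 hib with rfl | hiq
    · rw [hq.right_unique h']
    · obtain rfl := mem_singleton.1 hiq
      exact absurd h'.closer (by simp [hwi])

theorem isPerfectMatching_matchingOfWord (hw : IsDyck w N) :
    IsPerfectMatching N (matchingOfWord w N) := by
  refine ⟨⟨fun b hb => ?_, fun i hi => ?_⟩, fun b hb => ?_⟩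
  · obtain ⟨p, q, hq, hpq, rfl⟩ := mem_matchingOfWord.1 hb
    have := hpq.lt
    refine ⟨fun t ht => ?_, insert_nonempty _ _⟩
    simp only [mem_insert, mem_singleton] at ht
    rw [mem_range]
    omega
  · obtain ⟨j, hj, huniq⟩ := hw.exists_pair_mem_matchingOfWord (mem_range.1 hi)
    refine card_eq_one.2 ⟨{i, j}, ext fun b => ?_⟩
    simp only [mem_filter, mem_singleton]
    exact ⟨fun ⟨hb, hib⟩ => huniq b hb hib, fun h => h ▸ ⟨hj, mem_insert_self i _⟩⟩
  · obtain ⟨p, q, -, hpq, rfl⟩ := mem_matchingOfWord.1 hb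
    exact card_pair hpq.lt.ne

theorem wordOf_matchingOfWord (hw : IsDyck w N) (hi : i < N) :
    wordOf (matchingOfWord w N) i = w i := by
  have hM := hw.isPerfectMatching_matchingOfWord
  cases hwi : w i
  · obtain ⟨p, hp⟩ := hw.exists_isFirstReturn_of_closer hi hwi
    have hmem := pair_comm p i ▸ mem_matchingOfWord.2 ⟨p, i, hi, hp, rfl⟩
    simp [wordOf, hM.mate_eq hmem hp.lt.ne, hp.lt.le]
  · obtain ⟨q, hqN, hq⟩ := hw.exists_isFirstReturn hi hwi
    have hmem := mem_matchingOfWord.2 ⟨i, q, hqN, hq, rfl⟩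
    simp [wordOf, hM.mate_eq hmem hq.lt.ne', hq.lt]

end IsDyck

end MatchingOfWord

section WordOfNoncrossing

namespace IsPerfectMatching

variable {N : ℕ} {P : Finset (Finset ℕ)} {p t : ℕ}

theorem sum_sign_wordOf_eq_zero (hP : IsPerfectMatching N P) {s : Finset ℕ}
    (hs : ∀ t ∈ s, t < N ∧ mate P t ∈ s) :
    ∑ t ∈ s, (if wordOf P t then (1 : ℤ) else -1) = 0 := by
  refine sum_involution (fun t _ => mate P t) (fun t ht => ?_)
    (fun t ht _ => hP.mate_ne (hs t ht).1) (fun t ht => (hs t ht).2)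
    (fun t ht => hP.mate_mate (hs t ht).1)
  rw [hP.wordOf_mate (hs t ht).1]
  cases wordOf P t <;> simp

theorem sum_sign_wordOf_nonneg (hP : IsPerfectMatching N P) {s : Finset ℕ}
    (hs : ∀ t ∈ s, t < N) (hclosed : ∀ t ∈ s, wordOf P t = false → mate P t ∈ s) :
    0 ≤ ∑ t ∈ s, (if wordOf P t then (1 : ℤ) else -1) := by
  rw [sum_sign_eq_card_sub_card, sub_nonneg, Nat.cast_le]
  refine card_le_card_of_injOn (mate P) (fun t ht => ?_) (fun t ht t' ht' h => ?_)
  · simp only [coe_filter, Set.mem_ofPred_eq] at ht ⊢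
    refine ⟨hclosed t ht.1 ht.2, ?_⟩
    rw [hP.wordOf_mate (hs t ht.1), ht.2, Bool.not_false]
  · simp only [coe_filter, Set.mem_ofPred_eq] at ht ht'
    rw [← hP.mate_mate (hs t ht.1), h, hP.mate_mate (hs t' ht'.1)]

theorem isDyck_wordOf (hP : IsPerfectMatching N P) : IsDyck (wordOf P) N := by
  refine ⟨fun r hr => hP.sum_sign_wordOf_nonneg (fun t ht => by rw [mem_range] at ht; omega)
    fun t ht hwt => ?_, hP.sum_sign_wordOf_eq_zero fun t ht => ?_⟩
  · rw [mem_range] at ht ⊢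
    have := (hP.wordOf_eq_false_iff (by omega)).1 hwt
    omega
  · rw [mem_range] at ht ⊢
    exact ⟨ht, hP.mate_lt ht⟩

theorem mate_mem_Ioo (hP : IsPerfectMatching N P) (hnc : IsNoncrossing P) (hp : p < N)
    (hpt : p < t) (htq : t < mate P p) : p < mate P t ∧ mate P t < mate P p := by
  have htN : t < N := htq.trans (hP.mate_lt hp)
  have hne₁ : mate P t ≠ p := fun h => by
    have := hP.mate_mate htN
    rw [h] at this
    omega
  have hne₂ : mate P t ≠ mate P p := fun h => by
    have := congrArg (mate P) h
    rw [hP.mate_mate htN, hP.mate_mate hp] at this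
    omega
  constructor
  · by_contra
    exact hnc _ _ _ _ (pair_comm t _ ▸ hP.pair_mate_mem htN) (hP.pair_mate_mem hp)
      ⟨by omega, hpt, htq⟩
  · by_contra
    exact hnc _ _ _ _ (hP.pair_mate_mem hp) (hP.pair_mate_mem htN) ⟨hpt, htq, by omega⟩

theorem isFirstReturn_mate (hP : IsPerfectMatching N P) (hnc : IsNoncrossing P) (hp : p < N)
    (hpq : p < mate P p) : IsFirstReturn (wordOf P) p (mate P p) := by
  set q := mate P p
  have hqN : q < N := hP.mate_lt hp
  have hIoo : ∀ t ∈ Ico (p + 1) q, p < mate P t ∧ mate P t < q := fun t ht => by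
    rw [mem_Ico] at ht
    exact hP.mate_mem_Ioo hnc hp (by omega) ht.2
  have hup : level (wordOf P) (p + 1) = level (wordOf P) p + 1 :=
    level_succ_of_true (by simpa [wordOf] using hpq)
  have hdown : level (wordOf P) (q + 1) = level (wordOf P) q - 1 :=
    level_succ_of_false (by rw [hP.wordOf_mate hp]; simpa [wordOf] using hpq)
  have hbalanced : level (wordOf P) q - level (wordOf P) (p + 1) = 0 := by
    rw [level_sub_level _ hpq]
    refine hP.sum_sign_wordOf_eq_zero fun t ht => ⟨?_, ?_⟩
    · rw [mem_Ico] at ht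
      omega
    · have := hIoo t ht
      rw [mem_Ico]
      omega
  have hnonneg : ∀ r, p < r → r ≤ q → 0 ≤ level (wordOf P) r - level (wordOf P) (p + 1) := by
    intro r hpr hrq
    rw [level_sub_level _ hpr]
    refine hP.sum_sign_wordOf_nonneg (fun t ht => ?_) fun t ht hwt => ?_
    · rw [mem_Ico] at ht
      omega
    · have := hIoo t (Ico_subset_Ico_right hrq ht)
      rw [mem_Ico] at ht ⊢
      have := (hP.wordOf_eq_false_iff (by omega)).1 hwt
      omega
  exact ⟨hpq, by omega, fun r hpr hrq => by have := hnonneg r hpr hrq; omega⟩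

theorem matchingOfWord_wordOf (hP : IsPerfectMatching N P) (hnc : IsNoncrossing P) :
    matchingOfWord (wordOf P) N = P := by
  ext b
  rw [mem_matchingOfWord]
  constructor
  · rintro ⟨p, q, hqN, hpq, rfl⟩
    have hp : p < N := hpq.lt.trans hqN
    have hopen : p < mate P p := by simpa [wordOf] using hpq.opener
    rw [hpq.right_unique (hP.isFirstReturn_mate hnc hp hopen)]
    exact hP.pair_mate_mem hp
  · intro hb
    obtain ⟨p, hp, hpq, rfl⟩ := hP.exists_eq_pair_mate hb
    exact ⟨p, mate P p, hP.mate_lt hp, hP.isFirstReturn_mate hnc hp hpq, rfl⟩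

end IsPerfectMatching

end WordOfNoncrossing

section Boxes

variable {m : ℕ} {n : Fin m → ℕ} {i : ℕ} {j j' : Fin m}

def box (n : Fin m → ℕ) (j : Fin m) : Finset ℕ := Ico (psum n j) (psum n j + n j)

theorem mem_box : i ∈ box n j ↔ psum n j ≤ i ∧ i < psum n j + n j := mem_Ico

theorem psum_eq_sum_filter (v : Fin m → ℕ) (j : Fin m) : psum v j = ∑ t ∈ univ with t < j, v t := by
  rw [psum, sum_filter]

theorem psum_add_le_psum {t : Fin m} (h : t < j) : psum n t + n t ≤ psum n j := by
  rw [psum_eq_sum_filter, psum_eq_sum_filter, add_comm, ← sum_insert (by simp)]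
  refine sum_le_sum_of_subset fun x hx => ?_
  simp only [mem_insert, mem_filter, mem_univ, true_and] at hx ⊢
  rcases hx with rfl | hx
  · exact h
  · exact hx.trans h

theorem psum_add_le_total (t : Fin m) : psum n t + n t ≤ total n := by
  rw [psum_eq_sum_filter, add_comm, ← sum_insert (by simp), total]
  exact sum_le_sum_of_subset (subset_univ _)

theorem lt_total_of_mem_box (hi : i ∈ box n j) : i < total n := by
  have := psum_add_le_total (n := n) j
  rw [mem_box] at hi
  omega

theorem disjoint_box (h : j ≠ j') : Disjoint (box n j) (box n j') := by
  wlog hlt : j < j' generalizing j j'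
  · exact (this h.symm (lt_of_le_of_ne (not_lt.1 hlt) h.symm)).symm
  have := psum_add_le_psum (n := n) hlt
  exact disjoint_left.2 fun i hi hi' => by rw [mem_box] at hi hi'; omega

theorem eq_of_mem_box (hj : i ∈ box n j) (hj' : i ∈ box n j') : j = j' :=
  by_contra fun h => disjoint_left.1 (disjoint_box h) hj hj'

theorem biUnion_box : univ.biUnion (box n) = range (total n) := by
  refine eq_of_subset_of_card_le (fun i hi => ?_) ?_
  · obtain ⟨j, -, hj⟩ := mem_biUnion.1 hi
    exact mem_range.2 (lt_total_of_mem_box hj)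
  · rw [card_biUnion fun j _ j' _ h => disjoint_box h, card_range]
    simp [box, total]

theorem exists_mem_box (hi : i < total n) : ∃ j, i ∈ box n j := by
  rw [← mem_range, ← biUnion_box] at hi
  simpa using hi

theorem range_psum_eq_biUnion (j : Fin m) :
    range (psum n j) = {t ∈ (univ : Finset (Fin m)) | t < j}.biUnion (box n) := by
  ext i
  simp only [mem_range, mem_biUnion, mem_filter, mem_univ, true_and]
  constructor
  · intro hi
    obtain ⟨t, ht⟩ := exists_mem_box (n := n)
      (lt_of_lt_of_le hi (by have := psum_add_le_total (n := n) j; omega))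
    refine ⟨t, lt_of_not_ge fun hjt => ?_, ht⟩
    rw [mem_box] at ht
    rcases eq_or_lt_of_le hjt with rfl | hlt
    · omega
    · have := psum_add_le_psum (n := n) hlt
      omega
  · rintro ⟨t, ht, hi⟩
    have := psum_add_le_psum (n := n) ht
    rw [mem_box] at hi
    omega

theorem card_filter_range_psum (p : ℕ → Prop) [DecidablePred p] (j : Fin m) :
    #{i ∈ range (psum n j) | p i} = psum (fun t => #{i ∈ box n t | p i}) j := by
  rw [range_psum_eq_biUnion, filter_biUnion,
    card_biUnion fun t _ t' _ h => disjoint_filter_filter (disjoint_box h), psum_eq_sum_filter]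

theorem card_filter_range_total (p : ℕ → Prop) [DecidablePred p] :
    #{i ∈ range (total n) | p i} = ∑ t, #{i ∈ box n t | p i} := by
  rw [← biUnion_box, filter_biUnion,
    card_biUnion fun t _ t' _ h => disjoint_filter_filter (disjoint_box h)]

end Boxes

section BoxSortedWords

variable {m : ℕ} {n : Fin m → ℕ} {w w' : ℕ → Bool} {a : Fin m → ℕ} {i k r : ℕ} {j : Fin m}

def closerCount (n : Fin m → ℕ) (w : ℕ → Bool) (j : Fin m) : ℕ := #{i ∈ box n j | w i = false}

def IsBoxSorted (n : Fin m → ℕ) (w : ℕ → Bool) : Prop :=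
  ∀ j, ∀ i ∈ box n j, ∀ k ∈ box n j, i ≤ k → w i = true → w k = true

def boxWord (n : Fin m → ℕ) (a : Fin m → ℕ) (i : ℕ) : Bool :=
  decide (∃ j, i ∈ box n j ∧ psum n j + a j ≤ i)

theorem closerCount_le (j : Fin m) : closerCount n w j ≤ n j :=
  (card_filter_le _ _).trans (by simp [box])

theorem closerCount_congr (h : ∀ i < total n, w i = w' i) :
    closerCount n w = closerCount n w' := by
  funext j
  exact congrArg card (filter_congr fun i hi => by rw [h i (lt_total_of_mem_box hi)])

theorem boxWord_of_mem_box (hi : i ∈ box n j) :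
    boxWord n a i = decide (psum n j + a j ≤ i) := by
  simp only [boxWord, decide_eq_decide]
  exact ⟨fun ⟨j', hj', h⟩ => eq_of_mem_box hj' hi ▸ h, fun h => ⟨j, hi, h⟩⟩

theorem isBoxSorted_boxWord : IsBoxSorted n (boxWord n a) := by
  intro j i hi k hk hik hwi
  rw [boxWord_of_mem_box hi, decide_eq_true_iff] at hwi
  rw [boxWord_of_mem_box hk, decide_eq_true_iff]
  omega

theorem closerCount_boxWord (ha : ∀ j, a j ≤ n j) : closerCount n (boxWord n a) = a := by
  funext j
  have : {i ∈ box n j | boxWord n a i = false} = Ico (psum n j) (psum n j + a j) := by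
    ext i
    rw [mem_filter, mem_Ico]
    refine ⟨fun ⟨hi, hwi⟩ => ?_, fun hi => ?_⟩
    · rw [boxWord_of_mem_box hi, decide_eq_false_iff_not] at hwi
      rw [mem_box] at hi
      omega
    · have hi' : i ∈ box n j := by
        have := ha j
        rw [mem_box]
        omega
      rw [boxWord_of_mem_box hi', decide_eq_false_iff_not]
      exact ⟨hi', by omega⟩
  rw [closerCount, this, Nat.card_Ico, Nat.add_sub_cancel_left]

namespace IsBoxSorted

theorem eq_false_of_le (hw : IsBoxSorted n w) (hi : i ∈ box n j) (hk : k ∈ box n j) (hik : i ≤ k)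
    (hwk : w k = false) : w i = false := by
  by_contra hwi
  simpa [hwk] using hw j i hi k hk hik (by simpa using hwi)

theorem filter_box (hw : IsBoxSorted n w) (j : Fin m) :
    {i ∈ box n j | w i = false} = Ico (psum n j) (psum n j + closerCount n w j) := by
  have hcount := closerCount_le (n := n) (w := w) j
  ext i
  rw [mem_filter, mem_Ico]
  constructor
  · rintro ⟨hi, hwi⟩
    have hsub : Ico (psum n j) (i + 1) ⊆ {t ∈ box n j | w t = false} := fun t ht => by
      rw [mem_Ico] at ht
      have ht' : t ∈ box n j := by rw [mem_box] at hi ⊢; omega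
      exact mem_filter.2 ⟨ht', hw.eq_false_of_le ht' hi (by omega) hwi⟩
    have : i + 1 - psum n j ≤ closerCount n w j :=
      (Nat.card_Ico _ _).ge.trans (card_le_card hsub)
    rw [mem_box] at hi
    omega
  · intro hi
    have hi' : i ∈ box n j := by rw [mem_box]; omega
    refine ⟨hi', ?_⟩
    by_contra hwi
    have hsub : {t ∈ box n j | w t = false} ⊆ Ico (psum n j) i := fun t ht => by
      rw [mem_filter] at ht
      have : t < i := lt_of_not_ge fun hit =>
        hwi (hw.eq_false_of_le hi' ht.1 hit ht.2)
      rw [mem_box] at ht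
      rw [mem_Ico]
      omega
    have : closerCount n w j ≤ i - psum n j := (card_le_card hsub).trans (Nat.card_Ico _ _).le
    omega

theorem boxWord_closerCount (hw : IsBoxSorted n w) (hi : i < total n) :
    boxWord n (closerCount n w) i = w i := by
  obtain ⟨j, hj⟩ := exists_mem_box hi
  have hmem : i ∈ {t ∈ box n j | w t = false} ↔ i < psum n j + closerCount n w j := by
    rw [hw.filter_box, mem_Ico]
    rw [mem_box] at hj
    omega
  rw [boxWord_of_mem_box hj]
  cases hwi : w i <;> simp_all

theorem card_filter_range (hw : IsBoxSorted n w) (hr₁ : psum n j ≤ r)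
    (hr₂ : r ≤ psum n j + n j) :
    #{t ∈ range r | w t = false}
      = psum (closerCount n w) j + min (closerCount n w j) (r - psum n j) := by
  have hIco : {t ∈ Ico (psum n j) r | w t = false}
      = Ico (psum n j) (psum n j + min (closerCount n w j) (r - psum n j)) := by
    ext t
    have hbox := Finset.ext_iff.1 (hw.filter_box j) t
    simp only [mem_filter, mem_box, mem_Ico] at hbox ⊢
    constructor
    · rintro ⟨ht, hwt⟩
      have := (hbox.1 ⟨⟨ht.1, by omega⟩, hwt⟩).2
      omega
    · rintro ⟨ht₁, ht₂⟩
      exact ⟨⟨ht₁, by omega⟩, (hbox.2 ⟨ht₁, by omega⟩).2⟩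
  rw [card_filter, ← sum_range_add_sum_Ico _ hr₁, ← card_filter, ← card_filter, hIco,
    card_filter_range_psum, Nat.card_Ico, Nat.add_sub_cancel_left]
  rfl

end IsBoxSorted

end BoxSortedWords

section Admissible

variable {m : ℕ}

/-- `a j` counts the closers in box `j` and `h` the arcs opened before the first box; the
inequality for `j` says that the walk stays nonnegative at its lowest point in box `j`, right after
the closers. -/
def Admissible (n : Fin m → ℕ) (h : ℕ) (a : Fin m → ℕ) : Prop :=
  (∀ j, 2 * psum a j + a j ≤ h + psum n j) ∧ 2 * total a = h + total n

noncomputable def admissibleSet (n : Fin m → ℕ) (h : ℕ) : Finset (Fin m → ℕ) :=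
  {a ∈ Fintype.piFinset fun j => range (n j + 1) | Admissible n h a}

theorem mem_admissibleSet {n a : Fin m → ℕ} {h : ℕ} :
    a ∈ admissibleSet n h ↔ (∀ j, a j ≤ n j) ∧ Admissible n h a := by
  simp [admissibleSet]

theorem IsBoxSorted.isDyck_iff {n : Fin m → ℕ} {w : ℕ → Bool} (hw : IsBoxSorted n w) :
    IsDyck w (total n) ↔ Admissible n 0 (closerCount n w) := by
  have hlevel : ∀ j r, psum n j ≤ r → r ≤ psum n j + n j → level w r
      = r - 2 * (psum (closerCount n w) j + min (closerCount n w j) (r - psum n j) : ℕ) :=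
    fun j r hr₁ hr₂ => by rw [level_eq, hw.card_filter_range hr₁ hr₂]
  have hend : level w (total n) = total n - 2 * (total (closerCount n w) : ℕ) := by
    rw [level_eq, card_filter_range_total]
    rfl
  constructor
  · rintro ⟨hnonneg, hzero⟩
    refine ⟨fun j => ?_, by omega⟩
    have := closerCount_le (n := n) (w := w) j
    have := psum_add_le_total (n := n) j
    have := hlevel j (psum n j + closerCount n w j) (by omega) (by omega)
    have := hnonneg (psum n j + closerCount n w j) (by omega)
    omega
  · rintro ⟨hvalley, htotal⟩
    refine ⟨fun r hr => ?_, by omega⟩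
    rcases eq_or_lt_of_le hr with rfl | hr
    · omega
    obtain ⟨j, hj⟩ := exists_mem_box hr
    rw [mem_box] at hj
    have := hlevel j r hj.1 hj.2.le
    have := hvalley j
    omega

theorem psum_zero (v : Fin (m + 1) → ℕ) : psum v 0 = 0 := by
  simp [psum]

theorem psum_succ_s11 (v : Fin (m + 1) → ℕ) (j : Fin m) :
    psum v j.succ = v 0 + psum (Fin.tail v) j := by
  simp [psum, Fin.sum_univ_succ, Fin.tail]

theorem total_succ (v : Fin (m + 1) → ℕ) : total v = v 0 + total (Fin.tail v) :=
  Fin.sum_univ_succ v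

theorem admissible_succ_iff {n a : Fin (m + 1) → ℕ} {h : ℕ} (ha : a 0 ≤ n 0) :
    Admissible n h a ↔ a 0 ≤ h ∧ Admissible (Fin.tail n) (n 0 + h - 2 * a 0) (Fin.tail a) := by
  simp only [Admissible, Fin.forall_fin_succ, psum_zero, psum_succ_s11, total_succ]
  constructor
  · rintro ⟨⟨h₀, hsucc⟩, htotal⟩
    exact ⟨by omega, fun j => by have := hsucc j; simp only [Fin.tail]; omega, by omega⟩
  · rintro ⟨h₀, hsucc, htotal⟩
    exact ⟨⟨by omega, fun j => by have := hsucc j; simp only [Fin.tail] at this; omega⟩, by omega⟩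

theorem card_admissibleSet_of_isEmpty (n : Fin 0 → ℕ) (h : ℕ) :
    #(admissibleSet n h) = if h = 0 then 1 else 0 := by
  simp [admissibleSet, Admissible, total, eq_comm, apply_ite card]

theorem filter_admissibleSet_eq_map_cons (n : Fin (m + 1) → ℕ) (h k : ℕ) (hk : k ≤ min (n 0) h) :
    {a ∈ admissibleSet n h | a 0 = k}
      = (admissibleSet (Fin.tail n) (n 0 + h - 2 * k)).map
          ⟨Fin.cons k, Fin.cons_right_injective (α := fun _ => ℕ) k⟩ := by
  ext a
  simp only [mem_filter, mem_map, Function.Embedding.coeFn_mk, mem_admissibleSet]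
  constructor
  · rintro ⟨⟨hle, hadm⟩, rfl⟩
    exact ⟨Fin.tail a, ⟨fun j => hle j.succ, ((admissible_succ_iff (hle 0)).1 hadm).2⟩,
      Fin.cons_self_tail a⟩
  · rintro ⟨b, ⟨hle, hadm⟩, rfl⟩
    have hle' : ∀ j, (Fin.cons k b : Fin (m + 1) → ℕ) j ≤ n j :=
      Fin.cases (by rw [Fin.cons_zero]; omega) hle
    refine ⟨⟨hle', (admissible_succ_iff (hle' 0)).2 ?_⟩, by simp⟩
    simp only [Fin.cons_zero, Fin.tail_cons]
    exact ⟨by omega, hadm⟩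

theorem card_admissibleSet_succ (n : Fin (m + 1) → ℕ) (h : ℕ) :
    #(admissibleSet n h)
      = ∑ k ∈ range (min (n 0) h + 1), #(admissibleSet (Fin.tail n) (n 0 + h - 2 * k)) := by
  refine card_eq_sum_card_fiberwise (f := fun a => a 0) (fun a ha => ?_) |>.trans
    (sum_congr rfl fun k hk => ?_)
  · obtain ⟨hle, hadm⟩ := mem_admissibleSet.1 ha
    have := ((admissible_succ_iff (hle 0)).1 hadm).1
    have := hle 0
    simp only [coe_range, Set.mem_Iio]
    omega
  · rw [filter_admissibleSet_eq_map_cons n h k (by rw [mem_range] at hk; omega), card_map]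

end Admissible

section Bijection

variable {m : ℕ} {n : Fin m → ℕ} {P : Finset (Finset ℕ)}

theorem mem_filter_matchings_iff :
    P ∈ {P ∈ matchings n | crossNum (total n) P = 0}
      ↔ IsPerfectMatching (total n) P ∧ IsNoncrossing P ∧ InhomBlocks n P := by
  simp only [matchings, mem_filter, mem_powerset]
  constructor
  · rintro ⟨⟨-, hpart, hcard, hinh⟩, hcr⟩
    exact ⟨⟨hpart, hcard⟩, (IsPerfectMatching.crossNum_eq_zero_iff ⟨hpart, hcard⟩).1 hcr, hinh⟩
  · rintro ⟨hP, hnc, hinh⟩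
    exact ⟨⟨fun b hb => mem_powerset.2 (hP.isPartitionOf.1 b hb).1, hP.isPartitionOf,
      hP.card_eq_two, hinh⟩, hP.crossNum_eq_zero_iff.2 hnc⟩

/-- If an opener `i` is followed in its box by a closer `k`, inhomogeneity pushes both partners out
of the interval `[i, k]`, and the two blocks cross. -/
theorem IsPerfectMatching.isBoxSorted_wordOf (hP : IsPerfectMatching (total n) P)
    (hnc : IsNoncrossing P) (hinh : InhomBlocks n P) : IsBoxSorted n (wordOf P) := by
  intro j i hi k hk hik hwi
  by_contra hwk
  have hsame : ∀ x ∈ box n j, mate P x ∉ box n j := fun x hx hmx => by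
    have hxN := lt_total_of_mem_box hx
    exact hinh _ (hP.pair_mate_mem hxN) x (mem_insert_self x _) (mate P x) (by simp)
      (hP.mate_ne hxN).symm ⟨j, mem_box.1 hx, mem_box.1 hmx⟩
  have hiN := lt_total_of_mem_box hi
  have hkN := lt_total_of_mem_box hk
  have hopen : i < mate P i := by simpa [wordOf] using hwi
  have hclose : mate P k < k := (hP.wordOf_eq_false_iff hkN).1 (by simpa using hwk)
  have hik' : i < k := lt_of_le_of_ne hik fun h => by subst h; omega
  rw [mem_box] at hi hk
  have hki : k < mate P i := lt_of_not_ge fun h => hsame i (mem_box.2 hi) (mem_box.2 (by omega))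
  have hik'' : mate P k < i := lt_of_not_ge fun h => hsame k (mem_box.2 hk) (mem_box.2 (by omega))
  exact hnc _ _ _ _ (pair_comm k _ ▸ hP.pair_mate_mem hkN) (hP.pair_mate_mem hiN)
    ⟨hik'', hik', hki⟩

theorem inhomBlocks_matchingOfWord {w : ℕ → Bool} {N : ℕ} (hw : IsBoxSorted n w) :
    InhomBlocks n (matchingOfWord w N) := by
  rintro b hb i hi k hk hik ⟨j, hij, hkj⟩
  obtain ⟨p, q, -, hpq, rfl⟩ := mem_matchingOfWord.1 hb
  have hpq_box : p ∈ box n j ∧ q ∈ box n j := by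
    replace hij : i ∈ box n j := mem_box.2 hij
    replace hkj : k ∈ box n j := mem_box.2 hkj
    simp only [mem_insert, mem_singleton] at hi hk
    rcases hi with rfl | rfl <;> rcases hk with rfl | rfl <;> simp_all
  exact absurd (hw j p hpq_box.1 q hpq_box.2 hpq.lt.le hpq.opener) (by simp [hpq.closer])

theorem card_filter_matchings_crossNum_eq_zero (n : Fin m → ℕ) :
    #{P ∈ matchings n | crossNum (total n) P = 0} = #(admissibleSet n 0) := by
  have hdyck : ∀ a ∈ admissibleSet n 0, IsDyck (boxWord n a) (total n) := fun a ha => by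
    obtain ⟨hle, hadm⟩ := mem_admissibleSet.1 ha
    exact isBoxSorted_boxWord.isDyck_iff.2 ((closerCount_boxWord hle).symm ▸ hadm)
  refine card_nbij' (fun P => closerCount n (wordOf P))
    (fun a => matchingOfWord (boxWord n a) (total n)) (fun P hP => ?_) (fun a ha => ?_)
    (fun P hP => ?_) (fun a ha => ?_)
  · obtain ⟨hP, hnc, hinh⟩ := mem_filter_matchings_iff.1 hP
    exact mem_admissibleSet.2 ⟨closerCount_le,
      (hP.isBoxSorted_wordOf hnc hinh).isDyck_iff.1 hP.isDyck_wordOf⟩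
  · exact mem_filter_matchings_iff.2 ⟨(hdyck a ha).isPerfectMatching_matchingOfWord,
      isNoncrossing_matchingOfWord, inhomBlocks_matchingOfWord isBoxSorted_boxWord⟩
  · obtain ⟨hP, hnc, hinh⟩ := mem_filter_matchings_iff.1 hP
    calc matchingOfWord (boxWord n (closerCount n (wordOf P))) (total n)
        = matchingOfWord (wordOf P) (total n) :=
          matchingOfWord_congr fun i hi => (hP.isBoxSorted_wordOf hnc hinh).boxWord_closerCount hi
      _ = P := hP.matchingOfWord_wordOf hnc
  · calc closerCount n (wordOf (matchingOfWord (boxWord n a) (total n)))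
        = closerCount n (boxWord n a) :=
          closerCount_congr fun i hi => (hdyck a ha).wordOf_matchingOfWord hi
      _ = a := closerCount_boxWord (mem_admissibleSet.1 ha).1

end Bijection

open Polynomial Polynomial.Chebyshev Real

section Chebyshev

theorem chebU_eq_eval_U (k : ℕ) (x : ℝ) : chebU k x = (U ℝ k).eval x := by
  induction k using Nat.twoStepInduction with
  | zero => simp [chebU]
  | one => simp [chebU]
  | more k ih₀ ih₁ =>
    rw [chebU, ih₀, ih₁, show ((k + 2 : ℕ) : ℤ) = k + 2 by push_cast; ring, U_add_two]
    simp

theorem U_mul_U {R : Type*} [CommRing R] (c : ℕ) (h : ℤ) :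
    U R c * U R h = ∑ k ∈ range (c + 1), U R (h + c - 2 * k) := by
  have two_X_mul_U : ∀ j : ℤ, 2 * X * U R j = U R (j + 1) + U R (j - 1) := fun j => by
    linear_combination -U_add_one R j
  induction c using Nat.twoStepInduction with
  | zero => simp
  | one =>
    simp only [Nat.cast_one, U_one, sum_range_succ, sum_range_zero, Nat.cast_zero]
    rw [two_X_mul_U]
    ring_nf
  | more c ih₀ ih₁ =>
    have step : ∀ k : ℕ, 2 * X * U R (h + (c + 1 : ℕ) - 2 * k)
        = U R (h + (c + 2 : ℕ) - 2 * k) + U R (h + c - 2 * k) := fun k => by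
      rw [two_X_mul_U]
      push_cast
      ring_nf
    have last : h + c - 2 * ((c + 1 : ℕ) : ℤ) = h + (c + 2 : ℕ) - 2 * ((c + 2 : ℕ) : ℤ) := by
      push_cast
      ring
    calc U R (c + 2 : ℕ) * U R h = 2 * X * (U R (c + 1 : ℕ) * U R h) - U R c * U R h := by
          push_cast
          rw [U_add_two]
          ring
      _ = ∑ k ∈ range (c + 2), (U R (h + (c + 2 : ℕ) - 2 * k) + U R (h + c - 2 * k))
            - ∑ k ∈ range (c + 1), U R (h + c - 2 * k) := by
          rw [ih₁, ih₀, mul_sum]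
          simp_rw [step]
      _ = ∑ k ∈ range (c + 2 + 1), U R (h + (c + 2 : ℕ) - 2 * k) := by
          rw [sum_add_distrib, sum_range_succ (fun k : ℕ => U R (h + c - 2 * k)), last,
            sum_range_succ _ (c + 2)]
          ring

theorem U_mul_U_eq_sum_range_min {R : Type*} [CommRing R] (c h : ℕ) :
    U R c * U R h = ∑ k ∈ range (min c h + 1), U R ((c + h - 2 * k : ℕ) : ℤ) := by
  wlog hch : c ≤ h generalizing c h
  · rw [mul_comm, min_comm, add_comm c h]
    exact this h c (by omega)
  rw [min_eq_left hch, U_mul_U]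
  refine sum_congr rfl fun k hk => ?_
  rw [mem_range] at hk
  push_cast [show 2 * k ≤ c + h by omega]
  ring_nf

/-- Since `2 (1 - X²) U_j = T_j - T_{j+2}`, this is the orthogonality of the `T_j` for the weight
`1 / √(1 - x²)`. -/
theorem integral_eval_U_mul_sqrt (j : ℕ) :
    ∫ x in (-1 : ℝ)..1, (U ℝ j).eval x * √(1 - x ^ 2) = if j = 0 then π / 2 else 0 := by
  have hTU : 2 * ((1 - X ^ 2) * U ℝ j) = T ℝ j - T ℝ (j + 2) := by
    linear_combination 2 * one_sub_X_sq_mul_U_eq_pol_in_T ℝ j - T_add_two ℝ j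
  have hT : ∀ k : ℤ, Integrable (fun x => (T ℝ k).eval x) measureT := fun k =>
    integrable_measureT (Polynomial.continuous _).continuousOn
  calc ∫ x in (-1 : ℝ)..1, (U ℝ j).eval x * √(1 - x ^ 2)
      = ∫ x, ((1 - X ^ 2) * U ℝ j).eval x ∂measureT := by
        rw [integral_measureT]
        congr 1 with x
        simp only [eval_mul, eval_sub, eval_one, eval_pow, eval_X]
        rw [Real.sqrt_inv]
        conv_lhs => rw [← Real.div_sqrt (x := 1 - x ^ 2)]
        ring
    _ = (∫ x, (T ℝ j).eval x ∂measureT - ∫ x, (T ℝ (j + 2)).eval x ∂measureT) / 2 := by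
        rw [← integral_sub (hT _) (hT _), eq_div_iff two_ne_zero, ← integral_mul_const]
        congr 1 with x
        rw [← eval_sub, ← hTU]
        simp only [eval_mul, eval_ofNat]
        ring
    _ = if j = 0 then π / 2 else 0 := by
        rw [integral_eval_T_real_measureT_of_ne_zero (n := j + 2) (by omega)]
        split_ifs with hj
        · rw [hj, Nat.cast_zero, integral_eval_T_real_measureT_zero]
          ring
        · rw [integral_eval_T_real_measureT_of_ne_zero (by omega)]
          simp

theorem integral_eval_U_mul_prod {m : ℕ} (n : Fin m → ℕ) (h : ℕ) :
    ∫ x in (-1 : ℝ)..1, (U ℝ h * ∏ j, U ℝ (n j)).eval x * √(1 - x ^ 2)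
      = π / 2 * #(admissibleSet n h) := by
  induction m generalizing h with
  | zero =>
    simp only [univ_eq_empty, prod_empty, mul_one, integral_eval_U_mul_sqrt,
      card_admissibleSet_of_isEmpty]
    split_ifs <;> simp
  | succ m ih =>
    have hlin : U ℝ h * ∏ j, U ℝ (n j) = ∑ k ∈ range (min (n 0) h + 1),
        U ℝ ((n 0 + h - 2 * k : ℕ) : ℤ) * ∏ j, U ℝ (Fin.tail n j) := by
      rw [Fin.prod_univ_succ, ← mul_assoc, mul_comm (U ℝ h), U_mul_U_eq_sum_range_min, sum_mul]
      rfl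
    have hint (p : ℝ[X]) : IntervalIntegrable (fun x => p.eval x * √(1 - x ^ 2)) volume (-1) 1 :=
      (p.continuous.mul (by fun_prop)).intervalIntegrable _ _
    simp_rw [hlin, eval_finsetSum, sum_mul]
    rw [intervalIntegral.integral_finsetSum fun k _ => hint _, card_admissibleSet_succ,
      Nat.cast_sum, mul_sum]
    exact sum_congr rfl fun k _ => ih _ _

end Chebyshev

/-- the number of crossing-free inhomogeneous perfect matchings is
given by the Chebyshev integral. -/
theorem crossing_free_matchings_chebyshev {m : ℕ} (n : Fin m → ℕ) :
    (((matchings n).filter fun P => crossNum (total n) P = 0).card : ℝ)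
      = 2 / Real.pi *
          ∫ x in (-1 : ℝ)..1, (∏ j : Fin m, chebU (n j) x) * Real.sqrt (1 - x ^ 2) := by
  have h := integral_eval_U_mul_prod n 0
  simp only [Nat.cast_zero, U_zero, one_mul, eval_prod] at h
  simp_rw [chebU_eq_eval_U, h, card_filter_matchings_crossNum_eq_zero]
  field_simp

end Paper
end
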